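/- arXiv:math/9502214 — 9 statements merged into one kernel-verified Lean document; each statement's English description precedes it below -/
import Mathlib

section
/- Let R be a commutative ring, A and B finite multisets of elements of R, and a, b ∈ R. Then for every integer n ≥ 1, the complementary symmetric function satisfies the recursion comp_n(A + {a}; B + {b}) = comp_n(A; B) + (b − a) · comp_{n−1}(A; B + {b}), where A + {a} denotes the multiset A with one extra copy of a adjoined (similarly B + {b}). -/
/-- `h_n(B)`: the complete homogeneous symmetric function of degree `n` in the
elements of the multiset `B`, defined as the coefficient of `t^n` in
`∏_{b ∈ B} (1 + b t + b² t² + ⋯) = ∏_{b ∈ B} 1/(1 - b t)`. -/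
noncomputable def hsymmM {R : Type*} [CommRing R] (B : Multiset R) (n : ℕ) : R :=
  PowerSeries.coeff n ((B.map fun b => PowerSeries.mk fun k => b ^ k).prod)

/-- `e_k(A)`: the elementary symmetric function of degree `k` in the elements of
the multiset `A`. -/
def esymmM {R : Type*} [CommRing R] (A : Multiset R) (k : ℕ) : R :=
  ((A.powersetCard k).map Multiset.prod).sum

/-- The complementary symmetric function `comp_n(A;B) = ∑_{j=0}^n (-1)^j e_j(A) h_{n-j}(B)`. -/
noncomputable def compM {R : Type*} [CommRing R] (A B : Multiset R) (n : ℕ) : R :=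
  ∑ j ∈ Finset.range (n + 1), (-1 : R) ^ j * esymmM A j * hsymmM B (n - j)

/-!
In generating functions, `∑ₙ comp_n(A;B) tⁿ = ∏_{a ∈ A} (1 - a t) · ∏_{b ∈ B} (1 - b t)⁻¹`.
Adjoining `a` to `A` and `b` to `B` multiplies this series by `(1 - a t)/(1 - b t)
= 1 + (b - a) t/(1 - b t)`, and comparing coefficients of `tⁿ` gives the recursion.
-/

open PowerSeries

section

variable {R : Type*} [CommRing R]

lemma esymmM_zero (A : Multiset R) : esymmM A 0 = 1 := by
  simp [esymmM, Multiset.powersetCard_zero_left]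

lemma esymmM_zero_succ (j : ℕ) : esymmM (0 : Multiset R) (j + 1) = 0 := by
  simp [esymmM, Multiset.powersetCard_zero_right]

lemma esymmM_cons_succ (a : R) (A : Multiset R) (j : ℕ) :
    esymmM (a ::ₘ A) (j + 1) = esymmM A (j + 1) + a * esymmM A j := by
  simp only [esymmM, Multiset.powersetCard_cons, Multiset.map_add, Multiset.sum_add,
    Multiset.map_map, Function.comp_def, Multiset.prod_cons, Multiset.sum_map_mul_left]

noncomputable def esymmSeries (A : Multiset R) : R⟦X⟧ :=
  (A.map fun a => 1 - C a * X).prod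

noncomputable def hsymmSeries (B : Multiset R) : R⟦X⟧ :=
  (B.map fun b => mk fun k => b ^ k).prod

lemma esymmSeries_cons (a : R) (A : Multiset R) :
    esymmSeries (a ::ₘ A) = (1 - C a * X) * esymmSeries A := by
  simp [esymmSeries]

lemma coeff_esymmSeries (A : Multiset R) (j : ℕ) :
    coeff j (esymmSeries A) = (-1) ^ j * esymmM A j := by
  induction A using Multiset.induction generalizing j with
  | empty =>
    cases j with
    | zero => simp [esymmSeries, esymmM_zero]
    | succ j => simp [esymmSeries, esymmM_zero_succ, coeff_one]
  | cons a A ih =>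
    rw [esymmSeries_cons]
    cases j with
    | zero => simpa [esymmM_zero] using ih 0
    | succ j =>
      rw [sub_mul, one_mul, map_sub, mul_assoc, coeff_C_mul, coeff_succ_X_mul, ih, ih,
        esymmM_cons_succ]
      ring

lemma coeff_hsymmSeries (B : Multiset R) (n : ℕ) : coeff n (hsymmSeries B) = hsymmM B n := rfl

lemma one_sub_C_mul_X_mul_mk_pow (b : R) : (1 - C b * X) * mk (fun k => b ^ k) = 1 := by
  have h := congrArg (rescale b) (mk_one_mul_one_sub_eq_one R)
  rw [map_mul, map_sub, map_one, rescale_X, rescale_mk, mul_comm] at h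
  simpa using h

lemma one_sub_C_mul_X_mul_hsymmSeries_cons (b : R) (B : Multiset R) :
    (1 - C b * X) * hsymmSeries (b ::ₘ B) = hsymmSeries B := by
  simp only [hsymmSeries, Multiset.map_cons, Multiset.prod_cons, ← mul_assoc,
    one_sub_C_mul_X_mul_mk_pow, one_mul]

lemma compM_eq_coeff (A B : Multiset R) (n : ℕ) :
    compM A B n = coeff n (esymmSeries A * hsymmSeries B) := by
  simp only [compM, coeff_mul, Finset.Nat.sum_antidiagonal_eq_sum_range_succ_mk,
    coeff_esymmSeries, coeff_hsymmSeries]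

lemma esymmSeries_cons_mul_hsymmSeries_cons (a b : R) (A B : Multiset R) :
    esymmSeries (a ::ₘ A) * hsymmSeries (b ::ₘ B) =
      esymmSeries A * hsymmSeries B + C (b - a) * X * (esymmSeries A * hsymmSeries (b ::ₘ B)) := by
  rw [esymmSeries_cons, ← one_sub_C_mul_X_mul_hsymmSeries_cons b B, map_sub]
  ring

end

/-- Recursion for the complementary symmetric function:
`comp_n(A + {a}; B + {b}) = comp_n(A;B) + (b - a) · comp_{n-1}(A; B + {b})` for `n ≥ 1`. -/
theorem stmt3 {R : Type*} [CommRing R] (A B : Multiset R) (a b : R) (n : ℕ) (hn : 1 ≤ n) :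
    compM (a ::ₘ A) (b ::ₘ B) n = compM A B n + (b - a) * compM A (b ::ₘ B) (n - 1) := by
  obtain ⟨m, rfl⟩ := Nat.exists_eq_add_of_le' hn
  simp only [compM_eq_coeff, esymmSeries_cons_mul_hsymmSeries_cons, map_add, mul_assoc,
    coeff_C_mul, coeff_succ_X_mul, Nat.add_sub_cancel]
end

section
/- Let R be a commutative ring, n ≥ 0, and let a_1, a_2, …, a_{n+1} be elements of R. Then in the polynomial ring R[x], x^n = ∑_{k=0}^{n} h_k(a_1, …, a_{n−k+1}) · ∏_{i=1}^{n−k} (x − a_i), where h_k denotes the k-th complete homogeneous symmetric function (the sum of all monomials of total degree k in its arguments, with h_0 = 1). -/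
/-!
Write the sum with `j = n - k` and induct on `n`. Multiplying by `X = (X - a_{j+1}) + a_{j+1}`
sends the Newton basis polynomial `∏_{i ≤ j} (X - a_i)` to the next one plus `a_{j+1}` times
itself, and the recurrence
`h_{k+1}(a_1,…,a_{j+1}) = h_{k+1}(a_1,…,a_j) + a_{j+1} h_k(a_1,…,a_{j+1})`,
read off from `1/(1 - bt) = 1 + bt/(1 - bt)`, recombines the coefficients.
-/

open Polynomial Finset

section hsymmM

variable {R : Type*} [CommRing R]

theorem hsymmM_zero_right (B : Multiset R) : hsymmM B 0 = 1 := by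
  simp [hsymmM, PowerSeries.coeff_zero_eq_constantCoeff, map_multiset_prod, Function.comp_def]

theorem hsymmM_zero_succ (k : ℕ) : hsymmM (0 : Multiset R) (k + 1) = 0 := by
  simp [hsymmM]

theorem PowerSeries.mk_pow_eq_one_add (b : R) :
    (PowerSeries.mk fun k => b ^ k : PowerSeries R) =
      1 + PowerSeries.C b * PowerSeries.X * PowerSeries.mk fun k => b ^ k := by
  ext (_ | m)
  · simp
  · rw [map_add, mul_assoc, PowerSeries.coeff_C_mul, PowerSeries.coeff_succ_X_mul]
    simp [pow_succ, mul_comm]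

theorem hsymmM_cons_succ (b : R) (B : Multiset R) (k : ℕ) :
    hsymmM (b ::ₘ B) (k + 1) = hsymmM B (k + 1) + b * hsymmM (b ::ₘ B) k := by
  simp only [hsymmM, Multiset.map_cons, Multiset.prod_cons]
  conv_lhs => rw [PowerSeries.mk_pow_eq_one_add]
  rw [add_mul, one_mul, map_add, mul_assoc, mul_assoc, PowerSeries.coeff_C_mul,
    PowerSeries.coeff_succ_X_mul]

end hsymmM

section Newton

variable {R : Type*} [CommRing R] (a : ℕ → R)

noncomputable def newtonNodes (m : ℕ) : Multiset R :=
  (Multiset.range m).map fun i => a (i + 1)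

noncomputable def newtonBasis (m : ℕ) : R[X] :=
  ∏ i ∈ range m, (X - C (a (i + 1)))

theorem hsymmM_newtonNodes_succ_succ (m k : ℕ) :
    hsymmM (newtonNodes a (m + 1)) (k + 1) =
      hsymmM (newtonNodes a m) (k + 1) + a (m + 1) * hsymmM (newtonNodes a (m + 1)) k := by
  simp only [newtonNodes, Multiset.range_succ, Multiset.map_cons]
  exact hsymmM_cons_succ _ _ _

theorem X_mul_newtonBasis (m : ℕ) :
    X * newtonBasis a m = newtonBasis a (m + 1) + C (a (m + 1)) * newtonBasis a m := by
  rw [newtonBasis, newtonBasis, prod_range_succ]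
  ring

theorem X_pow_eq_sum_hsymmM_mul_newtonBasis (n : ℕ) :
    (X ^ n : R[X]) =
      ∑ j ∈ range (n + 1), C (hsymmM (newtonNodes a (j + 1)) (n - j)) * newtonBasis a j := by
  induction n with
  | zero => simp [hsymmM_zero_right, newtonBasis]
  | succ n ih =>
    have hsplit : ∀ j ∈ range (n + 1),
        C (hsymmM (newtonNodes a (j + 1)) (n + 1 - j)) * newtonBasis a j =
          C (hsymmM (newtonNodes a j) (n - j + 1)) * newtonBasis a j +
            C (hsymmM (newtonNodes a (j + 1)) (n - j)) * (C (a (j + 1)) * newtonBasis a j) := by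
      intro j hj
      rw [Nat.sub_add_comm (Nat.lt_succ_iff.mp (mem_range.mp hj)), hsymmM_newtonNodes_succ_succ,
        map_add, map_mul]
      ring
    have hshift : ∑ j ∈ range (n + 1),
          C (hsymmM (newtonNodes a (j + 1)) (n - j)) * newtonBasis a (j + 1) =
        ∑ j ∈ range (n + 1), C (hsymmM (newtonNodes a j) (n - j + 1)) * newtonBasis a j +
          newtonBasis a (n + 1) := by
      rw [sum_range_succ, sum_range_succ' _ n, Nat.sub_self, hsymmM_zero_right, map_one,
        one_mul]
      have hempty : hsymmM (newtonNodes a 0) (n - 0 + 1) = 0 := hsymmM_zero_succ _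
      rw [hempty, map_zero, zero_mul, add_zero, add_left_inj]
      refine sum_congr rfl fun j hj => ?_
      rw [Nat.sub_add_eq, Nat.sub_add_cancel (Nat.sub_pos_of_lt (mem_range.mp hj))]
    calc (X ^ (n + 1) : R[X])
        = ∑ j ∈ range (n + 1),
            C (hsymmM (newtonNodes a (j + 1)) (n - j)) * (X * newtonBasis a j) := by
          rw [pow_succ', ih, mul_sum]
          exact sum_congr rfl fun _ _ => mul_left_comm _ _ _
      _ = ∑ j ∈ range (n + 1),
              C (hsymmM (newtonNodes a (j + 1)) (n - j)) * newtonBasis a (j + 1) +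
            ∑ j ∈ range (n + 1),
              C (hsymmM (newtonNodes a (j + 1)) (n - j)) * (C (a (j + 1)) * newtonBasis a j) := by
          simp only [X_mul_newtonBasis, mul_add, sum_add_distrib]
      _ = ∑ j ∈ range (n + 1), C (hsymmM (newtonNodes a j) (n - j + 1)) * newtonBasis a j +
            ∑ j ∈ range (n + 1),
              C (hsymmM (newtonNodes a (j + 1)) (n - j)) * (C (a (j + 1)) * newtonBasis a j) +
            newtonBasis a (n + 1) := by
          rw [add_right_comm _ _ (newtonBasis a (n + 1)), hshift]
      _ = ∑ j ∈ range (n + 2),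
            C (hsymmM (newtonNodes a (j + 1)) (n + 1 - j)) * newtonBasis a j := by
          rw [sum_range_succ _ (n + 1), ← sum_add_distrib, sum_congr rfl hsplit]
          simp [hsymmM_zero_right]

end Newton

/-- `x^n = ∑_{k=0}^n h_k(a₁,…,a_{n-k+1}) ∏_{i=1}^{n-k} (x - a_i)`. -/
theorem stmt7 {R : Type*} [CommRing R] (n : ℕ) (a : ℕ → R) :
    (Polynomial.X ^ n : Polynomial R) =
      ∑ k ∈ Finset.range (n + 1),
        Polynomial.C (hsymmM ((Multiset.range (n - k + 1)).map fun i => a (i + 1)) k) *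
          ∏ i ∈ Finset.range (n - k), (Polynomial.X - Polynomial.C (a (i + 1))) := by
  rw [X_pow_eq_sum_hsymmM_mul_newtonBasis a n, ← sum_range_reflect]
  refine sum_congr rfl fun k hk => ?_
  rw [Nat.add_sub_cancel, Nat.sub_sub_self (Nat.lt_succ_iff.mp (mem_range.mp hk))]
  rfl
end

section
/- For every real number x > 0, the series ∑_{k=1}^{∞} (k−1)! / ((x+1)(x+2)⋯(x+k)) converges and its sum equals 1/x. -/
open Finset Filter Topology
open scoped Nat

/-!
Put `b n = n! / ((x+1)⋯(x+n))`. Since `b n - b (n+1) = b n · x / (x+n+1)`, the `n`-th term is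
`(b n - b (n+1)) / x`, so the series telescopes to `(b 0 - lim b) / x = 1 / x`. The limit is `0`
because `1 / b n = ∏_{i ≤ n} (1 + x/i) ≥ 1 + x (1 + 1/2 + ⋯ + 1/n)`, which diverges with the
harmonic series.
-/

theorem Finset.one_add_sum_le_prod_one_add {ι R : Type*} [CommSemiring R] [PartialOrder R]
    [IsOrderedRing R] (s : Finset ι) {f : ι → R} (hf : ∀ i ∈ s, 0 ≤ f i) :
    1 + ∑ i ∈ s, f i ≤ ∏ i ∈ s, (1 + f i) := by
  classical
  induction s using Finset.induction_on with
  | empty => simp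
  | insert a s ha ih =>
    rw [sum_insert ha, prod_insert ha]
    have hfa : 0 ≤ f a := hf a (mem_insert_self a s)
    have hs : 0 ≤ ∑ i ∈ s, f i := sum_nonneg fun i hi => hf i (mem_insert_of_mem hi)
    calc 1 + (f a + ∑ i ∈ s, f i) ≤ 1 + (f a + ∑ i ∈ s, f i) + f a * ∑ i ∈ s, f i :=
          le_add_of_nonneg_right (mul_nonneg hfa hs)
      _ = (1 + f a) * (1 + ∑ i ∈ s, f i) := by ring
      _ ≤ (1 + f a) * ∏ i ∈ s, (1 + f i) :=
          mul_le_mul_of_nonneg_left (ih fun i hi => hf i (mem_insert_of_mem hi))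
            (add_nonneg zero_le_one hfa)

theorem hasSum_sub_succ_of_tendsto {f : ℕ → ℝ} {l : ℝ} (hf : ∀ n, f (n + 1) ≤ f n)
    (h : Tendsto f atTop (𝓝 l)) : HasSum (fun n => f n - f (n + 1)) (f 0 - l) := by
  rw [hasSum_iff_tendsto_nat_of_nonneg fun n => sub_nonneg.2 (hf n)]
  simp only [sum_range_sub']
  exact tendsto_const_nhds.sub h

section

variable {K : Type*} [Field K]

def factorialDivPochhammer (x : K) (n : ℕ) : K := n ! / ∏ i ∈ range n, (x + (i + 1))

@[simp]
theorem factorialDivPochhammer_zero (x : K) : factorialDivPochhammer x 0 = 1 := by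
  simp [factorialDivPochhammer]

theorem mul_factorial_div_prod_eq_sub (x : K) (n : ℕ)
    (hx : ∏ i ∈ range (n + 1), (x + (i + 1)) ≠ 0) :
    x * (n ! / ∏ i ∈ range (n + 1), (x + (i + 1))) =
      factorialDivPochhammer x n - factorialDivPochhammer x (n + 1) := by
  rw [prod_range_succ, mul_ne_zero_iff] at hx
  obtain ⟨hP, hn⟩ := hx
  simp only [factorialDivPochhammer, prod_range_succ, Nat.factorial_succ]
  field_simp
  push_cast
  ring

theorem factorialDivPochhammer_eq_inv_prod [CharZero K] (x : K) (n : ℕ) :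
    factorialDivPochhammer x n = (∏ i ∈ range n, (1 + x / (i + 1)))⁻¹ := by
  have : ∏ i ∈ range n, (1 + x / (i + 1)) = (∏ i ∈ range n, (x + (i + 1))) / n ! := by
    rw [← prod_range_add_one_eq_factorial n]
    push_cast
    rw [← prod_div_distrib]
    refine prod_congr rfl fun i _ => ?_
    have : (i : K) + 1 ≠ 0 := by exact_mod_cast i.succ_ne_zero
    field_simp
    ring
  rw [this, inv_div, factorialDivPochhammer]

end

theorem tendsto_factorialDivPochhammer_atTop {x : ℝ} (hx : 0 < x) :
    Tendsto (factorialDivPochhammer x) atTop (𝓝 0) := by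
  have hbound : ∀ n, 1 + x * ∑ i ∈ range n, (1 / (i + 1) : ℝ) ≤
      ∏ i ∈ range n, (1 + x / (i + 1)) := fun n => by
    simpa only [mul_sum, mul_one_div] using
      one_add_sum_le_prod_one_add (range n) fun i _ => by positivity
  have hprod : Tendsto (fun n => ∏ i ∈ range n, (1 + x / (i + 1) : ℝ)) atTop atTop :=
    tendsto_atTop_mono hbound <| tendsto_atTop_add_const_left _ 1 <|
      Real.tendsto_sum_range_one_div_nat_succ_atTop.const_mul_atTop hx
  rw [funext (factorialDivPochhammer_eq_inv_prod x)]
  exact tendsto_inv_atTop_zero.comp hprod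

/-- For every real `x > 0`, `∑_{k=1}^∞ (k-1)! / ((x+1)(x+2)⋯(x+k)) = 1/x`
(the series, reindexed by `k ↦ k+1`, sums to `1/x`). -/
theorem stmt8 (x : ℝ) (hx : 0 < x) :
    HasSum (fun k : ℕ => (Nat.factorial k : ℝ) / ∏ i ∈ Finset.range (k + 1), (x + (i + 1)))
      (1 / x) := by
  have hP : ∀ n, 0 < ∏ i ∈ range n, (x + (i + 1)) := fun n =>
    prod_pos fun i _ => by positivity
  have hterm : ∀ n, (n ! : ℝ) / ∏ i ∈ range (n + 1), (x + (i + 1)) =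
      (factorialDivPochhammer x n - factorialDivPochhammer x (n + 1)) / x := fun n => by
    rw [← mul_factorial_div_prod_eq_sub x n (hP _).ne', mul_div_cancel_left₀ _ hx.ne']
  have hanti : ∀ n, factorialDivPochhammer x (n + 1) ≤ factorialDivPochhammer x n := fun n => by
    rw [← sub_nonneg, ← mul_factorial_div_prod_eq_sub x n (hP _).ne']
    exact mul_nonneg hx.le (div_nonneg (by positivity) (hP _).le)
  simp only [hterm]
  simpa only [factorialDivPochhammer_zero, sub_zero] using
    (hasSum_sub_succ_of_tendsto hanti (tendsto_factorialDivPochhammer_atTop hx)).div_const x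
end

section
/- For all integers n and k, the function ε ↦ Γ(n+1+ε) / (Γ(k+1+ε) · Γ(n−k+1+ε)), where Γ is the real Gamma function, converges as ε → 0 through nonzero real values to B(n,k). In particular the limit equals n!/(k!(n−k)!) when n ≥ k ≥ 0, equals (−1)^k·C(−n+k−1, k) when k ≥ 0 > n, equals (−1)^{n+k}·C(−k−1, n−k) when 0 > n ≥ k, and equals 0 in the three remaining regions. -/
open Filter Finset Real

/-- The generalized ("Roman") binomial coefficient `B(n,k)` for arbitrary integers `n, k`:
`n!/(k!(n-k)!)` when `n ≥ k ≥ 0`; `(-1)^k C(-n+k-1, k)` when `k ≥ 0 > n`;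
`(-1)^{n+k} C(-k-1, n-k)` when `0 > n ≥ k`; and `0` otherwise. -/
def Bgen (n k : ℤ) : ℤ :=
  if 0 ≤ k ∧ k ≤ n then (n.toNat.choose k.toNat : ℤ)
  else if 0 ≤ k ∧ n < 0 then (-1) ^ k.toNat * ((-n + k - 1).toNat.choose k.toNat : ℤ)
  else if k ≤ n ∧ n < 0 then (-1) ^ (n - k).toNat * ((-k - 1).toNat.choose (n - k).toNat : ℤ)
  else 0

namespace Stmt9Aux

lemma Gne {x : ℝ} (hx : 0 < x) : Real.Gamma x ≠ 0 := (Real.Gamma_pos_of_pos hx).ne'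

lemma contG {p : ℝ} (hp : 0 < p) : ContinuousAt Real.Gamma p := by
  refine (Real.differentiableAt_Gamma ?_).continuousAt
  intro m
  have : (0:ℝ) ≤ m := Nat.cast_nonneg m
  intro h; rw [h] at hp; linarith

lemma contGat (c : ℝ) (hc : 0 < c) : ContinuousAt (fun ε : ℝ => Real.Gamma (c + ε)) 0 := by
  have := (contG (p := c + 0) (by simpa using hc)).comp
    ((continuous_const.add continuous_id).continuousAt (x := (0:ℝ)))
  simpa [Function.comp_def] using this

lemma contQ (m : ℕ) : Continuous (fun ε : ℝ => ∏ j ∈ range m, (ε - (j + 1))) := by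
  apply continuous_finset_prod
  intro i _
  exact continuous_id.sub continuous_const

lemma Qne (m : ℕ) {ε : ℝ} (h1 : |ε| < 1) : ∏ j ∈ range m, (ε - (j + 1)) ≠ 0 := by
  apply Finset.prod_ne_zero_iff.2
  intro j _
  have h2 : ε < 1 := (abs_lt.1 h1).2
  have h3 : (0:ℝ) ≤ (j:ℝ) := Nat.cast_nonneg j
  intro h; nlinarith

lemma prodfact (m : ℕ) :
    ∏ j ∈ range m, ((0:ℝ) - (j + 1)) = (-1) ^ m * m.factorial := by
  induction m with
  | zero => simp
  | succ m ih =>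
      rw [Finset.prod_range_succ, ih, Nat.factorial_succ, pow_succ]
      push_cast
      ring

/-- Key identity: `Γ(ε - m) = Γ(1+ε) / (ε * ∏_{j<m} (ε - (j+1)))` for small nonzero ε. -/
lemma gamma_neg (m : ℕ) {ε : ℝ} (h0 : ε ≠ 0) (h1 : |ε| < 1) :
    Real.Gamma (ε - m) = Real.Gamma (1 + ε) / (ε * ∏ j ∈ range m, (ε - (j + 1))) := by
  induction m with
  | zero =>
      simp only [Nat.cast_zero, sub_zero, Finset.range_zero, Finset.prod_empty, mul_one]
      rw [show (1:ℝ) + ε = ε + 1 by ring, Real.Gamma_add_one h0]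
      field_simp
  | succ m ih =>
      have hεm : ε - (m + 1 : ℝ) ≠ 0 := by
        have h2 : ε < 1 := (abs_lt.1 h1).2
        have h3 : (0:ℝ) ≤ (m:ℝ) := Nat.cast_nonneg m
        intro h; nlinarith
      have key : Real.Gamma ((ε - ((m:ℝ) + 1)) + 1) = (ε - ((m:ℝ)+1)) * Real.Gamma (ε - ((m:ℝ)+1)) :=
        Real.Gamma_add_one hεm
      have harg : (ε - ((m:ℝ) + 1)) + 1 = ε - m := by ring
      rw [harg] at key
      have : Real.Gamma (ε - ((m:ℝ) + 1)) = Real.Gamma (ε - m) / (ε - ((m:ℝ)+1)) := by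
        field_simp at key ⊢
        linarith [key]
      rw [show ((m+1 : ℕ):ℝ) = (m:ℝ) + 1 by push_cast; ring, this, ih, Finset.prod_range_succ]
      rw [div_div, mul_assoc]

lemma ev01 : ∀ᶠ ε : ℝ in nhdsWithin 0 {(0:ℝ)}ᶜ, ε ≠ 0 ∧ |ε| < 1 := by
  have h1 : ∀ᶠ ε : ℝ in nhdsWithin 0 {(0:ℝ)}ᶜ, |ε| < 1 :=
    eventually_nhdsWithin_of_eventually_nhds (by simpa using eventually_abs_sub_lt (0:ℝ) one_pos)
  filter_upwards [h1, self_mem_nhdsWithin] with ε h hn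
  exact ⟨hn, h⟩

lemma G1pos {ε : ℝ} (h1 : |ε| < 1) : (0:ℝ) < 1 + ε := by
  have := (abs_lt.1 h1).1; linarith

lemma algB (G1 Gb A C ε : ℝ) (h0 : ε ≠ 0) (hA : A ≠ 0) (hC : C ≠ 0) (hG1 : G1 ≠ 0)
    (hGb : Gb ≠ 0) : C / (A * Gb) = (G1 / (ε * A)) / (Gb * (G1 / (ε * C))) := by
  field_simp

lemma algC (G1 Gd A B ε : ℝ) (h0 : ε ≠ 0) (hA : A ≠ 0) (hB : B ≠ 0) (hG1 : G1 ≠ 0)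
    (hGd : Gd ≠ 0) : B / (A * Gd) = (G1 / (ε * A)) / ((G1 / (ε * B)) * Gd) := by
  field_simp

lemma algZ1 (G1 Gb Ga C ε : ℝ) (h0 : ε ≠ 0) (hC : C ≠ 0) (hG1 : G1 ≠ 0) (hGb : Gb ≠ 0) :
    ε * (C * Ga / (Gb * G1)) = Ga / (Gb * (G1 / (ε * C))) := by
  field_simp

lemma algZ2 (G1 Gd Ga B ε : ℝ) (h0 : ε ≠ 0) (hB : B ≠ 0) (hG1 : G1 ≠ 0) (hGd : Gd ≠ 0) :
    ε * (B * Ga / (G1 * Gd)) = Ga / ((G1 / (ε * B)) * Gd) := by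
  field_simp

lemma algZ3 (G1 A B C ε : ℝ) (h0 : ε ≠ 0) (hA : A ≠ 0) (hB : B ≠ 0) (hC : C ≠ 0)
    (hG1 : G1 ≠ 0) :
    ε * (B * C / (A * G1)) = (G1 / (ε * A)) / ((G1 / (ε * B)) * (G1 / (ε * C))) := by
  field_simp

/-- Case `n ≥ k ≥ 0`. -/
lemma caseA (a b : ℕ) (h : b ≤ a) :
    Tendsto (fun ε : ℝ => Real.Gamma ((a:ℝ) + 1 + ε) /
        (Real.Gamma ((b:ℝ) + 1 + ε) * Real.Gamma (((a - b : ℕ):ℝ) + 1 + ε)))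
      (nhdsWithin 0 {(0:ℝ)}ᶜ) (nhds ((a.choose b : ℝ))) := by
  have c1 := contGat ((a:ℝ) + 1) (by positivity)
  have c2 := contGat ((b:ℝ) + 1) (by positivity)
  have c3 := contGat (((a - b : ℕ):ℝ) + 1) (by positivity)
  have hne : Real.Gamma ((b:ℝ) + 1 + 0) * Real.Gamma (((a - b : ℕ):ℝ) + 1 + 0) ≠ 0 := by
    simp only [add_zero]
    exact mul_ne_zero (Gne (by positivity)) (Gne (by positivity))
  have hcont : ContinuousAt (fun ε : ℝ => Real.Gamma ((a:ℝ) + 1 + ε) /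
      (Real.Gamma ((b:ℝ) + 1 + ε) * Real.Gamma (((a - b : ℕ):ℝ) + 1 + ε))) 0 :=
    c1.div (c2.mul c3) hne
  have := hcont.tendsto.mono_left (nhdsWithin_le_nhds (s := {(0:ℝ)}ᶜ))
  convert this using 2
  simp only [add_zero, Real.Gamma_nat_eq_factorial]
  rw [eq_div_iff (by
    exact mul_ne_zero (Nat.cast_ne_zero.2 b.factorial_ne_zero)
      (Nat.cast_ne_zero.2 (a - b).factorial_ne_zero))]
  rw [← mul_assoc]
  exact_mod_cast Nat.choose_mul_factorial_mul_factorial h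

/-- Case `k ≥ 0 > n` : `n = -(a+1)`, `k = b`. -/
lemma caseB (a b : ℕ) :
    Tendsto (fun ε : ℝ => Real.Gamma (ε - (a:ℝ)) /
        (Real.Gamma ((b:ℝ) + 1 + ε) * Real.Gamma (ε - ((a + b : ℕ):ℝ))))
      (nhdsWithin 0 {(0:ℝ)}ᶜ)
      (nhds ((-1:ℝ) ^ b * ((a + b).choose b : ℝ))) := by
  have hQa0 : ∏ j ∈ range a, ((0:ℝ) - (j+1)) ≠ 0 := Qne a (by norm_num)
  have hG : Real.Gamma ((b:ℝ) + 1 + 0) ≠ 0 := by simp only [add_zero]; exact Gne (by positivity)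
  have hcont : ContinuousAt (fun ε : ℝ =>
      (∏ j ∈ range (a + b), (ε - (j+1))) /
        ((∏ j ∈ range a, (ε - (j+1))) * Real.Gamma ((b:ℝ) + 1 + ε))) 0 :=
    ((contQ (a+b)).continuousAt).div (((contQ a).continuousAt).mul (contGat ((b:ℝ)+1) (by positivity)))
      (mul_ne_zero hQa0 hG)
  have hT := hcont.tendsto.mono_left (nhdsWithin_le_nhds (s := {(0:ℝ)}ᶜ))
  have hval : (∏ j ∈ range (a + b), ((0:ℝ) - (j+1))) /
      ((∏ j ∈ range a, ((0:ℝ) - (j+1))) * Real.Gamma ((b:ℝ) + 1 + 0)) =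
      (-1:ℝ) ^ b * ((a + b).choose b : ℝ) := by
    simp only [add_zero, prodfact, Real.Gamma_nat_eq_factorial]
    rw [div_eq_iff (by
      exact mul_ne_zero (by
        exact mul_ne_zero (pow_ne_zero _ (by norm_num)) (Nat.cast_ne_zero.2 a.factorial_ne_zero))
        (Nat.cast_ne_zero.2 b.factorial_ne_zero))]
    have hc : (a+b).choose b * b.factorial * a.factorial = (a+b).factorial := by
      have := Nat.choose_mul_factorial_mul_factorial (Nat.le_add_left b a)
      simpa [Nat.add_sub_cancel] using this
    have hc' : ((a+b).choose b : ℝ) * (b.factorial : ℝ) * (a.factorial : ℝ) = ((a+b).factorial : ℝ) := by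
      exact_mod_cast hc
    rw [pow_add]
    linear_combination (-(-1:ℝ)^a * (-1)^b) * hc'
  rw [hval] at hT
  refine hT.congr' ?_
  filter_upwards [ev01] with ε hε
  obtain ⟨h0, h1⟩ := hε
  rw [gamma_neg a h0 h1, gamma_neg (a+b) h0 h1]
  have hQa : ∏ j ∈ range a, (ε - ((j:ℝ)+1)) ≠ 0 := Qne a h1
  have hQab : ∏ j ∈ range (a+b), (ε - ((j:ℝ)+1)) ≠ 0 := Qne (a+b) h1
  have hG1 : Real.Gamma (1 + ε) ≠ 0 := Gne (G1pos h1)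
  have hGb : Real.Gamma ((b:ℝ) + 1 + ε) ≠ 0 := Gne (by
    have h2 := (abs_lt.1 h1).1
    have h3 : (0:ℝ) ≤ ((b:ℝ)) := Nat.cast_nonneg b
    linarith)
  exact algB _ _ _ _ _ h0 hQa hQab hG1 hGb

/-- Case `0 > n ≥ k` : `n = -(a+1)`, `k = -(b+1)`, `a ≤ b`. -/
lemma caseC (a b : ℕ) (h : a ≤ b) :
    Tendsto (fun ε : ℝ => Real.Gamma (ε - (a:ℝ)) /
        (Real.Gamma (ε - (b:ℝ)) * Real.Gamma (((b - a : ℕ):ℝ) + 1 + ε)))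
      (nhdsWithin 0 {(0:ℝ)}ᶜ)
      (nhds ((-1:ℝ) ^ (b - a) * (b.choose (b - a) : ℝ))) := by
  have hQa0 : ∏ j ∈ range a, ((0:ℝ) - (j+1)) ≠ 0 := Qne a (by norm_num)
  have hG : Real.Gamma (((b - a : ℕ):ℝ) + 1 + 0) ≠ 0 := by
    simp only [add_zero]; exact Gne (by positivity)
  have hcont : ContinuousAt (fun ε : ℝ =>
      (∏ j ∈ range b, (ε - (j+1))) /
        ((∏ j ∈ range a, (ε - (j+1))) * Real.Gamma (((b - a : ℕ):ℝ) + 1 + ε))) 0 :=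
    ((contQ b).continuousAt).div
      (((contQ a).continuousAt).mul (contGat (((b - a : ℕ):ℝ)+1) (by positivity)))
      (mul_ne_zero hQa0 hG)
  have hT := hcont.tendsto.mono_left (nhdsWithin_le_nhds (s := {(0:ℝ)}ᶜ))
  have hval : (∏ j ∈ range b, ((0:ℝ) - (j+1))) /
      ((∏ j ∈ range a, ((0:ℝ) - (j+1))) * Real.Gamma (((b - a : ℕ):ℝ) + 1 + 0)) =
      (-1:ℝ) ^ (b - a) * (b.choose (b - a) : ℝ) := by
    simp only [add_zero, prodfact, Real.Gamma_nat_eq_factorial]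
    rw [div_eq_iff (by
      exact mul_ne_zero (by
        exact mul_ne_zero (pow_ne_zero _ (by norm_num)) (Nat.cast_ne_zero.2 a.factorial_ne_zero))
        (Nat.cast_ne_zero.2 (b - a).factorial_ne_zero))]
    have hc : b.choose (b - a) * (b - a).factorial * a.factorial = b.factorial := by
      have := Nat.choose_mul_factorial_mul_factorial (Nat.sub_le b a)
      rwa [Nat.sub_sub_self h] at this
    have hc' : (b.choose (b - a) : ℝ) * ((b - a).factorial : ℝ) * (a.factorial : ℝ)
        = (b.factorial : ℝ) := by exact_mod_cast hc
    have hpow : (-1:ℝ) ^ b = (-1:ℝ) ^ (b - a) * (-1:ℝ) ^ a := by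
      rw [← pow_add]; congr 1; omega
    rw [hpow]
    linear_combination (-(-1:ℝ)^(b-a) * (-1)^a) * hc'
  rw [hval] at hT
  refine hT.congr' ?_
  filter_upwards [ev01] with ε hε
  obtain ⟨h0, h1⟩ := hε
  rw [gamma_neg a h0 h1, gamma_neg b h0 h1]
  have hQa : ∏ j ∈ range a, (ε - ((j:ℝ)+1)) ≠ 0 := Qne a h1
  have hQb : ∏ j ∈ range b, (ε - ((j:ℝ)+1)) ≠ 0 := Qne b h1
  have hG1 : Real.Gamma (1 + ε) ≠ 0 := Gne (G1pos h1)
  have hGd : Real.Gamma (((b - a : ℕ):ℝ) + 1 + ε) ≠ 0 :=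
    Gne (by
    have h2 := (abs_lt.1 h1).1
    have h3 : (0:ℝ) ≤ (((b - a : ℕ)):ℝ) := Nat.cast_nonneg _
    linarith)
  exact algC _ _ _ _ _ h0 hQa hQb hG1 hGd

/-- Zero case `k > n ≥ 0` : `n = a`, `k = b`, `n - k = -(c+1)`. -/
lemma caseZ1 (a b c : ℕ) :
    Tendsto (fun ε : ℝ => Real.Gamma ((a:ℝ) + 1 + ε) /
        (Real.Gamma ((b:ℝ) + 1 + ε) * Real.Gamma (ε - (c:ℝ))))
      (nhdsWithin 0 {(0:ℝ)}ᶜ) (nhds 0) := by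
  have hcont : ContinuousAt (fun ε : ℝ =>
      ε * ((∏ j ∈ range c, (ε - (j+1))) * Real.Gamma ((a:ℝ) + 1 + ε) /
        (Real.Gamma ((b:ℝ) + 1 + ε) * Real.Gamma (1 + ε)))) 0 := by
    refine continuousAt_id.mul ?_
    refine ContinuousAt.div (((contQ c).continuousAt).mul (contGat ((a:ℝ)+1) (by positivity)))
      ((contGat ((b:ℝ)+1) (by positivity)).mul (contGat 1 one_pos)) ?_
    simp only [add_zero]
    exact mul_ne_zero (Gne (by positivity)) (Gne one_pos)
  have hT := hcont.tendsto.mono_left (nhdsWithin_le_nhds (s := {(0:ℝ)}ᶜ))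
  rw [zero_mul] at hT
  refine hT.congr' ?_
  filter_upwards [ev01] with ε hε
  obtain ⟨h0, h1⟩ := hε
  rw [gamma_neg c h0 h1]
  have hQc : ∏ j ∈ range c, (ε - ((j:ℝ)+1)) ≠ 0 := Qne c h1
  have hG1 : Real.Gamma (1 + ε) ≠ 0 := Gne (G1pos h1)
  have hGb : Real.Gamma ((b:ℝ) + 1 + ε) ≠ 0 := Gne (by
    have h2 := (abs_lt.1 h1).1
    have h3 : (0:ℝ) ≤ ((b:ℝ)) := Nat.cast_nonneg b
    linarith)
  exact algZ1 _ _ _ _ _ h0 hQc hG1 hGb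

/-- Zero case `n ≥ 0 > k` : `n = a`, `k = -(b+1)`, `n - k + 1 = a + b + 2`. -/
lemma caseZ2 (a b : ℕ) :
    Tendsto (fun ε : ℝ => Real.Gamma ((a:ℝ) + 1 + ε) /
        (Real.Gamma (ε - (b:ℝ)) * Real.Gamma (((a + b : ℕ):ℝ) + 2 + ε)))
      (nhdsWithin 0 {(0:ℝ)}ᶜ) (nhds 0) := by
  have hcont : ContinuousAt (fun ε : ℝ =>
      ε * ((∏ j ∈ range b, (ε - (j+1))) * Real.Gamma ((a:ℝ) + 1 + ε) /
        (Real.Gamma (1 + ε) * Real.Gamma (((a + b : ℕ):ℝ) + 2 + ε)))) 0 := by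
    refine continuousAt_id.mul ?_
    refine ContinuousAt.div (((contQ b).continuousAt).mul (contGat ((a:ℝ)+1) (by positivity)))
      ((contGat 1 one_pos).mul (contGat (((a + b : ℕ):ℝ)+2) (by positivity))) ?_
    simp only [add_zero]
    exact mul_ne_zero (Gne one_pos) (Gne (by positivity))
  have hT := hcont.tendsto.mono_left (nhdsWithin_le_nhds (s := {(0:ℝ)}ᶜ))
  rw [zero_mul] at hT
  refine hT.congr' ?_
  filter_upwards [ev01] with ε hε
  obtain ⟨h0, h1⟩ := hε
  rw [gamma_neg b h0 h1]
  have hQb : ∏ j ∈ range b, (ε - ((j:ℝ)+1)) ≠ 0 := Qne b h1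
  have hG1 : Real.Gamma (1 + ε) ≠ 0 := Gne (G1pos h1)
  have hGd : Real.Gamma (((a + b : ℕ):ℝ) + 2 + ε) ≠ 0 :=
    Gne (by
    have h2 := (abs_lt.1 h1).1
    have h3 : (0:ℝ) ≤ (((a + b : ℕ)):ℝ) := Nat.cast_nonneg _
    linarith)
  exact algZ2 _ _ _ _ _ h0 hQb hG1 hGd

/-- Zero case `0 > k > n` : `n = -(a+1)`, `k = -(b+1)`, `b < a`, `n - k = -(c+1)` with `c = a-b-1`. -/
lemma caseZ3 (a b c : ℕ) :
    Tendsto (fun ε : ℝ => Real.Gamma (ε - (a:ℝ)) /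
        (Real.Gamma (ε - (b:ℝ)) * Real.Gamma (ε - (c:ℝ))))
      (nhdsWithin 0 {(0:ℝ)}ᶜ) (nhds 0) := by
  have hQa0 : ∏ j ∈ range a, ((0:ℝ) - (j+1)) ≠ 0 := Qne a (by norm_num)
  have hcont : ContinuousAt (fun ε : ℝ =>
      ε * ((∏ j ∈ range b, (ε - (j+1))) * (∏ j ∈ range c, (ε - (j+1))) /
        ((∏ j ∈ range a, (ε - (j+1))) * Real.Gamma (1 + ε)))) 0 := by
    refine continuousAt_id.mul ?_
    refine ContinuousAt.div (((contQ b).continuousAt).mul ((contQ c).continuousAt))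
      (((contQ a).continuousAt).mul (contGat 1 one_pos)) ?_
    exact mul_ne_zero hQa0 (by simpa using Gne one_pos)
  have hT := hcont.tendsto.mono_left (nhdsWithin_le_nhds (s := {(0:ℝ)}ᶜ))
  rw [zero_mul] at hT
  refine hT.congr' ?_
  filter_upwards [ev01] with ε hε
  obtain ⟨h0, h1⟩ := hε
  rw [gamma_neg a h0 h1, gamma_neg b h0 h1, gamma_neg c h0 h1]
  have hQa : ∏ j ∈ range a, (ε - ((j:ℝ)+1)) ≠ 0 := Qne a h1
  have hQb : ∏ j ∈ range b, (ε - ((j:ℝ)+1)) ≠ 0 := Qne b h1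
  have hQc : ∏ j ∈ range c, (ε - ((j:ℝ)+1)) ≠ 0 := Qne c h1
  have hG1 : Real.Gamma (1 + ε) ≠ 0 := Gne (G1pos h1)
  exact algZ3 _ _ _ _ _ h0 hQa hQb hQc hG1

end Stmt9Aux

open Stmt9Aux

/-- The Gamma-function quotient `Γ(n+1+ε)/(Γ(k+1+ε)Γ(n-k+1+ε))` tends, as `ε → 0`
through nonzero real values, to the generalized binomial coefficient `B(n,k)`. -/
theorem stmt9 (n k : ℤ) :
    Filter.Tendsto
      (fun ε : ℝ =>
        Real.Gamma ((n : ℝ) + 1 + ε) /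
          (Real.Gamma ((k : ℝ) + 1 + ε) * Real.Gamma ((n : ℝ) - (k : ℝ) + 1 + ε)))
      (nhdsWithin (0 : ℝ) {(0 : ℝ)}ᶜ) (nhds ((Bgen n k : ℝ))) := by
  by_cases hA : 0 ≤ k ∧ k ≤ n
  · obtain ⟨hk0, hkn⟩ := hA
    have hn0 : 0 ≤ n := le_trans hk0 hkn
    obtain ⟨a, rfl⟩ : ∃ a : ℕ, n = (a:ℤ) := ⟨n.toNat, by omega⟩
    obtain ⟨b, rfl⟩ : ∃ b : ℕ, k = (b:ℤ) := ⟨k.toNat, by omega⟩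
    have hba : b ≤ a := by exact_mod_cast hkn
    have hv : ((Bgen (a:ℤ) (b:ℤ) : ℝ)) = (a.choose b : ℝ) := by
      rw [Bgen, if_pos ⟨by exact_mod_cast hk0, by exact_mod_cast hkn⟩]
      simp
    rw [hv]
    refine (caseA a b hba).congr fun ε => ?_
    rw [show (((a:ℤ)):ℝ) + 1 + ε = ((a:ℕ):ℝ) + 1 + ε from by push_cast; ring,
        show (((b:ℤ)):ℝ) + 1 + ε = ((b:ℕ):ℝ) + 1 + ε from by push_cast; ring,
        show (((a:ℤ)):ℝ) - (((b:ℤ)):ℝ) + 1 + ε = ((a - b : ℕ):ℝ) + 1 + ε from by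
          push_cast [Nat.cast_sub hba]; ring]
  · by_cases hB : 0 ≤ k ∧ n < 0
    · obtain ⟨hk0, hn0⟩ := hB
      obtain ⟨a, rfl⟩ : ∃ a : ℕ, n = -((a:ℤ) + 1) := ⟨(-(n+1)).toNat, by omega⟩
      obtain ⟨b, rfl⟩ : ∃ b : ℕ, k = (b:ℤ) := ⟨k.toNat, by omega⟩
      have hv : ((Bgen (-((a:ℤ)+1)) (b:ℤ) : ℝ)) = (-1:ℝ)^b * ((a+b).choose b : ℝ) := by
        rw [Bgen, if_neg (by omega), if_pos ⟨hk0, by omega⟩]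
        have e1 : ((b:ℤ)).toNat = b := by omega
        have e2 : (-(-((a:ℤ)+1)) + (b:ℤ) - 1).toNat = a + b := by omega
        rw [e1, e2]
        push_cast
        ring
      rw [hv]
      refine (caseB a b).congr fun ε => ?_
      rw [show ((-((a:ℤ)+1) : ℤ):ℝ) + 1 + ε = ε - (a:ℝ) from by push_cast; ring,
          show (((b:ℤ)):ℝ) + 1 + ε = ((b:ℕ):ℝ) + 1 + ε from by push_cast; ring,
          show ((-((a:ℤ)+1) : ℤ):ℝ) - (((b:ℤ)):ℝ) + 1 + ε = ε - ((a + b : ℕ):ℝ) from by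
            push_cast; ring]
    · by_cases hC : k ≤ n ∧ n < 0
      · obtain ⟨hkn, hn0⟩ := hC
        have hk0 : k < 0 := by by_contra h; exact hB ⟨by omega, hn0⟩
        obtain ⟨a, rfl⟩ : ∃ a : ℕ, n = -((a:ℤ) + 1) := ⟨(-(n+1)).toNat, by omega⟩
        obtain ⟨b, rfl⟩ : ∃ b : ℕ, k = -((b:ℤ) + 1) := ⟨(-(k+1)).toNat, by omega⟩
        have hab : a ≤ b := by omega
        have hv : ((Bgen (-((a:ℤ)+1)) (-((b:ℤ)+1)) : ℝ))
            = (-1:ℝ)^(b - a) * (b.choose (b - a) : ℝ) := by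
          rw [Bgen, if_neg (by omega), if_neg (by omega), if_pos ⟨hkn, hn0⟩]
          have e1 : (-((a:ℤ)+1) - -((b:ℤ)+1)).toNat = b - a := by omega
          have e2 : (-(-((b:ℤ)+1)) - 1).toNat = b := by omega
          rw [e1, e2]
          push_cast
          ring
        rw [hv]
        refine (caseC a b hab).congr fun ε => ?_
        rw [show ((-((a:ℤ)+1) : ℤ):ℝ) + 1 + ε = ε - (a:ℝ) from by push_cast; ring,
            show ((-((b:ℤ)+1) : ℤ):ℝ) + 1 + ε = ε - (b:ℝ) from by push_cast; ring,
            show ((-((a:ℤ)+1) : ℤ):ℝ) - ((-((b:ℤ)+1) : ℤ):ℝ) + 1 + ε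
                = ((b - a : ℕ):ℝ) + 1 + ε from by push_cast [Nat.cast_sub hab]; ring]
      · have hv : ((Bgen n k : ℝ)) = 0 := by
          rw [Bgen, if_neg hA, if_neg hB, if_neg hC]; norm_num
        rw [hv]
        by_cases hn0 : 0 ≤ n
        · by_cases hk0 : 0 ≤ k
          · have hnk : n < k := by omega
            obtain ⟨a, rfl⟩ : ∃ a : ℕ, n = (a:ℤ) := ⟨n.toNat, by omega⟩
            obtain ⟨b, rfl⟩ : ∃ b : ℕ, k = (b:ℤ) := ⟨k.toNat, by omega⟩
            obtain ⟨c, hc⟩ : ∃ c : ℕ, (b:ℤ) = (a:ℤ) + c + 1 := ⟨(b - a - 1), by omega⟩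
            have hcr : ((b:ℝ)) = (a:ℝ) + c + 1 := by exact_mod_cast hc
            refine (caseZ1 a b c).congr fun ε => ?_
            rw [show (((a:ℤ)):ℝ) + 1 + ε = ((a:ℕ):ℝ) + 1 + ε from by push_cast; ring,
                show (((b:ℤ)):ℝ) + 1 + ε = ((b:ℕ):ℝ) + 1 + ε from by push_cast; ring,
                show (((a:ℤ)):ℝ) - (((b:ℤ)):ℝ) + 1 + ε = ε - (c:ℝ) from by
                  push_cast; linarith [hcr]]
          · obtain ⟨a, rfl⟩ : ∃ a : ℕ, n = (a:ℤ) := ⟨n.toNat, by omega⟩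
            obtain ⟨b, rfl⟩ : ∃ b : ℕ, k = -((b:ℤ) + 1) := ⟨(-(k+1)).toNat, by omega⟩
            refine (caseZ2 a b).congr fun ε => ?_
            rw [show (((a:ℤ)):ℝ) + 1 + ε = ((a:ℕ):ℝ) + 1 + ε from by push_cast; ring,
                show ((-((b:ℤ)+1) : ℤ):ℝ) + 1 + ε = ε - (b:ℝ) from by push_cast; ring,
                show (((a:ℤ)):ℝ) - ((-((b:ℤ)+1) : ℤ):ℝ) + 1 + ε
                    = ((a + b : ℕ):ℝ) + 2 + ε from by push_cast; ring]
        · have hk0 : k < 0 := by omega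
          have hnk : n < k := by omega
          obtain ⟨a, rfl⟩ : ∃ a : ℕ, n = -((a:ℤ) + 1) := ⟨(-(n+1)).toNat, by omega⟩
          obtain ⟨b, rfl⟩ : ∃ b : ℕ, k = -((b:ℤ) + 1) := ⟨(-(k+1)).toNat, by omega⟩
          obtain ⟨c, hc⟩ : ∃ c : ℕ, (a:ℤ) = (b:ℤ) + c + 1 := ⟨(a - b - 1), by omega⟩
          have hcr : ((a:ℝ)) = (b:ℝ) + c + 1 := by exact_mod_cast hc
          refine (caseZ3 a b c).congr fun ε => ?_
          rw [show ((-((a:ℤ)+1) : ℤ):ℝ) + 1 + ε = ε - (a:ℝ) from by push_cast; ring,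
              show ((-((b:ℤ)+1) : ℤ):ℝ) + 1 + ε = ε - (b:ℝ) from by push_cast; ring,
              show ((-((a:ℤ)+1) : ℤ):ℝ) - ((-((b:ℤ)+1) : ℤ):ℝ) + 1 + ε = ε - (c:ℝ) from by
                push_cast; linarith [hcr]]
end

section
/- For all integers i, j, and k, the generalized binomial coefficients satisfy the iteration identity B(i, j) · B(j, k) = B(i, k) · B(i − k, j − k). -/
set_option maxHeartbeats 2000000


private lemma lemC' (t b c : ℕ) (h : c ≤ b) :
    (t + b).choose b * b.choose c = (t + c).choose c * (t + b).choose (b - c) := by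
  have h1 : (t + b).choose b * b.choose (b - c) =
      (t + b).choose (b - c) * (t + b - (b - c)).choose (b - (b - c)) :=
    Nat.choose_mul (Nat.sub_le b c)
  rw [Nat.choose_symm h] at h1
  have e1 : t + b - (b - c) = t + c := by omega
  have e2 : b - (b - c) = c := by omega
  rw [e1, e2] at h1
  rw [h1]; ring

private lemma lemB' (a b k : ℕ) (h : a ≤ b) :
    b.choose (b - a) * (b + k).choose k = (a + k).choose k * (b + k).choose (b - a) := by
  have e1 : b.choose (b - a) = b.choose a := Nat.choose_symm h
  have e2 : (b + k).choose k = (b + k).choose b := by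
    rw [← Nat.choose_symm (Nat.le_add_right b k)]; congr 1; omega
  have e3 : (a + k).choose k = (a + k).choose a := by
    rw [← Nat.choose_symm (Nat.le_add_right a k)]; congr 1; omega
  have e4 : (b + k).choose (b - a) = (b + k).choose (a + k) := by
    rw [← Nat.choose_symm (by omega : a + k ≤ b + k)]; congr 1; omega
  rw [e1, e2, e3, e4]
  have h1 : (b + k).choose b * b.choose a = (b + k).choose a * (b + k - a).choose (b - a) :=
    Nat.choose_mul h
  have h2 : (b + k).choose (a + k) * (a + k).choose a
      = (b + k).choose a * (b + k - a).choose (a + k - a) :=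
    Nat.choose_mul (by omega)
  have e5 : a + k - a = k := by omega
  rw [e5] at h2
  have e6 : (b + k - a).choose k = (b + k - a).choose (b - a) := by
    rw [← Nat.choose_symm (by omega : k ≤ b + k - a)]; congr 1; omega
  rw [e6] at h2
  calc b.choose a * (b + k).choose b = (b + k).choose b * b.choose a := by ring
    _ = (b + k).choose a * (b + k - a).choose (b - a) := h1
    _ = (b + k).choose (a + k) * (a + k).choose a := h2.symm
    _ = (a + k).choose a * (b + k).choose (a + k) := by ring

/-- Iteration: `B(i,j) B(j,k) = B(i,k) B(i-k, j-k)` for all integers `i, j, k`. -/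
theorem stmt11 (i j k : ℤ) : Bgen i j * Bgen j k = Bgen i k * Bgen (i - k) (j - k) := by
  unfold Bgen
  split_ifs
  all_goals try (exfalso; omega)
  all_goals try (simp only [zero_mul, mul_zero])
  -- Case A : 0 ≤ k ≤ j ≤ i
  · have e1 : (i - k).toNat = i.toNat - k.toNat := by omega
    have e2 : (j - k).toNat = j.toNat - k.toNat := by omega
    rw [e1, e2]
    exact_mod_cast Nat.choose_mul
      (show k.toNat ≤ j.toNat by omega)
  -- Case C : i < 0 ≤ k ≤ j
  · have e1 : (-i + j - 1).toNat = (-i - 1).toNat + j.toNat := by omega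
    have e2 : (-i + k - 1).toNat = (-i - 1).toNat + k.toNat := by omega
    have e3 : (-(i - k) + (j - k) - 1).toNat = (-i - 1).toNat + j.toNat := by omega
    have e4 : (j - k).toNat = j.toNat - k.toNat := by omega
    rw [e1, e2, e3, e4]
    have hc : (((((-i - 1).toNat + j.toNat).choose j.toNat : ℕ) : ℤ)) * (j.toNat.choose k.toNat : ℕ)
        = ((((-i - 1).toNat + k.toNat).choose k.toNat : ℕ) : ℤ)
          * ((((-i - 1).toNat + j.toNat).choose (j.toNat - k.toNat) : ℕ) : ℤ) := by
      exact_mod_cast lemC' (-i - 1).toNat j.toNat k.toNat (by omega)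
    have hs : ((-1 : ℤ)) ^ j.toNat = (-1) ^ k.toNat * (-1) ^ (j.toNat - k.toNat) := by
      rw [← pow_add]; congr 1; omega
    rw [hs]
    linear_combination ((-1 : ℤ)) ^ k.toNat * (-1) ^ (j.toNat - k.toNat) * hc
  -- Case B : j ≤ i < 0 ≤ k
  · have e1 : (i - j).toNat = (-j - 1).toNat - (-i - 1).toNat := by omega
    have e2 : (-j + k - 1).toNat = (-j - 1).toNat + k.toNat := by omega
    have e3 : (-i + k - 1).toNat = (-i - 1).toNat + k.toNat := by omega
    have e4 : (i - k - (j - k)).toNat = (-j - 1).toNat - (-i - 1).toNat := by omega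
    have e5 : (-(j - k) - 1).toNat = (-j - 1).toNat + k.toNat := by omega
    rw [e1, e2, e3, e4, e5]
    have hc : (((-j - 1).toNat.choose ((-j - 1).toNat - (-i - 1).toNat) : ℕ) : ℤ)
          * ((((-j - 1).toNat + k.toNat).choose k.toNat : ℕ) : ℤ)
        = ((((-i - 1).toNat + k.toNat).choose k.toNat : ℕ) : ℤ)
          * ((((-j - 1).toNat + k.toNat).choose ((-j - 1).toNat - (-i - 1).toNat) : ℕ) : ℤ) := by
      exact_mod_cast lemB' (-i - 1).toNat (-j - 1).toNat k.toNat (by omega)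
    linear_combination ((-1 : ℤ)) ^ ((-j - 1).toNat - (-i - 1).toNat) * (-1) ^ k.toNat * hc
  -- Case D : k ≤ j ≤ i < 0
  · have e1 : (-j - 1).toNat = (-k - 1).toNat - (j - k).toNat := by omega
    have e2 : (i - j).toNat = (i - k).toNat - (j - k).toNat := by omega
    rw [e1, e2]
    have hc : (((-k - 1).toNat.choose (i - k).toNat : ℕ) : ℤ)
          * (((i - k).toNat.choose (j - k).toNat : ℕ) : ℤ)
        = (((-k - 1).toNat.choose (j - k).toNat : ℕ) : ℤ)
          * ((((-k - 1).toNat - (j - k).toNat).choose ((i - k).toNat - (j - k).toNat) : ℕ) : ℤ) := by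
      exact_mod_cast Nat.choose_mul
        (show (j - k).toNat ≤ (i - k).toNat by omega)
    have hs : ((-1 : ℤ)) ^ (i - k).toNat
        = (-1) ^ ((i - k).toNat - (j - k).toNat) * (-1) ^ (j - k).toNat := by
      rw [← pow_add]; congr 1; omega
    rw [hs]
    linear_combination -((-1 : ℤ)) ^ ((i - k).toNat - (j - k).toNat) * (-1) ^ (j - k).toNat * hc
end

section
/- Let f be a hybrid set on a universe U all of whose multiplicities are nonnegative (i.e., a multiset). Then a hybrid set g satisfies g ⊑ f (g is a subset of f in the removal order) if and only if all multiplicities of g are nonnegative and g(x) ≤ f(x) for every x ∈ U. In particular, the subsets of a classical set are exactly its classical subsets, and the subsets of a multiset are exactly its sub-multisets. -/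
/-- `g` is a subset of the hybrid set `f` in the removal order: there are elements
`x₁, …, x_m` and hybrid sets `f = h₀, h₁, …, h_m` with `h_{j-1}(x_j) ≠ 0` and
`h_j = h_{j-1} - δ_{x_j}` for each `j`, such that either `h_m = g` (what is left is `g`)
or `g = δ_{x₁} + ⋯ + δ_{x_m}` (what was removed is `g`). -/
def HybridSubset {U : Type*} (g f : U →₀ ℤ) : Prop :=
  ∃ (m : ℕ) (x : Fin m → U) (h : Fin (m + 1) → (U →₀ ℤ)),
    h 0 = f ∧
    (∀ j : Fin m, h j.castSucc (x j) ≠ 0 ∧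
      h j.succ = h j.castSucc - Finsupp.single (x j) 1) ∧
    (h (Fin.last m) = g ∨ g = ∑ j : Fin m, Finsupp.single (x j) (1 : ℤ))

/-- The cardinality `#f = ∑_{x ∈ U} f(x)` of a hybrid set. -/
def hcard {U : Type*} (f : U →₀ ℤ) : ℤ :=
  f.sum fun _ v => v

/-- The "sum branch" of `HybridSubset`: `g` is exactly what was removed. -/
def HS' {U : Type*} (g f : U →₀ ℤ) : Prop :=
  ∃ (m : ℕ) (x : Fin m → U) (h : Fin (m + 1) → (U →₀ ℤ)),
    h 0 = f ∧
    (∀ j : Fin m, h j.castSucc (x j) ≠ 0 ∧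
      h j.succ = h j.castSucc - Finsupp.single (x j) 1) ∧
    g = ∑ j : Fin m, Finsupp.single (x j) (1 : ℤ)

lemma HS'.toHybridSubset {U : Type*} {g f : U →₀ ℤ} (h : HS' g f) : HybridSubset g f := by
  obtain ⟨m, x, hh, h0, hstep, hg⟩ := h
  exact ⟨m, x, hh, h0, hstep, Or.inr hg⟩

lemma HS'_zero {U : Type*} (f : U →₀ ℤ) : HS' 0 f := by
  refine ⟨0, Fin.elim0, fun _ => f, rfl, fun j => j.elim0, ?_⟩
  simp

lemma HS'_cons {U : Type*} {g f : U →₀ ℤ} {a : U} (ha : f a ≠ 0)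
    (h : HS' g (f - Finsupp.single a 1)) :
    HS' (Finsupp.single a 1 + g) f := by
  obtain ⟨m, x, hh, h0, hstep, hg⟩ := h
  refine ⟨m + 1, Fin.cons a x, Fin.cons f hh, by simp, ?_, ?_⟩
  · intro j
    induction j using Fin.cases with
    | zero =>
      refine ⟨by simpa using ha, ?_⟩
      rw [Fin.cons_succ, Fin.castSucc_zero, Fin.cons_zero, Fin.cons_zero, h0]
    | succ i =>
      refine ⟨?_, ?_⟩
      · rw [Fin.cons_succ, ← Fin.succ_castSucc, Fin.cons_succ]
        exact (hstep i).1
      · rw [Fin.cons_succ, ← Fin.succ_castSucc, Fin.cons_succ, Fin.cons_succ]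
        exact (hstep i).2
  · rw [Fin.sum_univ_succ]
    simp only [Fin.cons_zero, Fin.cons_succ]
    rw [hg]

lemma hcard_sub {U : Type*} (f g : U →₀ ℤ) : hcard (f - g) = hcard f - hcard g := by
  unfold hcard
  exact Finsupp.sum_sub_index (fun a b₁ b₂ => rfl)

lemma hcard_single {U : Type*} (a : U) : hcard (Finsupp.single a (1 : ℤ)) = 1 := by
  unfold hcard
  simp [Finsupp.sum_single_index]

lemma aux_back {U : Type*} : ∀ (n : ℕ) (g f : U →₀ ℤ), (∀ x, 0 ≤ g x) → (∀ x, g x ≤ f x) →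
    hcard g = n → HS' g f := by
  intro n
  induction n with
  | zero =>
    intro g f hg hgf hc
    have hg0 : g = 0 := by
      have h0 : ∀ x ∈ g.support, g x = 0 := by
        rw [← Finset.sum_eq_zero_iff_of_nonneg (fun x _ => hg x)]
        simpa [hcard, Finsupp.sum] using hc
      ext x
      by_cases hx : x ∈ g.support
      · exact h0 x hx
      · simpa using Finsupp.notMem_support_iff.mp hx
    rw [hg0]
    exact HS'_zero f
  | succ n ih =>
    intro g f hg hgf hc
    have hne : g ≠ 0 := by
      intro h
      rw [h] at hc
      simp [hcard] at hc
      omega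
    obtain ⟨a, ha⟩ : ∃ a, g a ≠ 0 := by
      by_contra hcon
      push_neg at hcon
      exact hne (Finsupp.ext fun x => by simpa using hcon x)
    have hga : 1 ≤ g a := by have := hg a; omega
    have hfa : f a ≠ 0 := by have := hgf a; omega
    have key := HS'_cons hfa (ih (g - Finsupp.single a 1) (f - Finsupp.single a 1)
      (fun x => ?_) (fun x => ?_) ?_)
    · rwa [add_sub_cancel] at key
    · simp only [Finsupp.sub_apply, Finsupp.single_apply]
      by_cases hx : a = x
      · subst hx; simpa using hga
      · simpa [hx] using hg x
    · simp only [Finsupp.sub_apply]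
      have := hgf x
      omega
    · rw [hcard_sub, hcard_single, hc]
      push_cast
      ring

/-- If all multiplicities of `f` are nonnegative (i.e. `f` is a multiset), then the subsets of
`f` in the removal order are exactly the hybrid sets `g` with nonnegative multiplicities
satisfying `g(x) ≤ f(x)` everywhere, i.e. the classical sub(multi)sets of `f`. -/
theorem stmt14 {U : Type*} (f : U →₀ ℤ) (hf : ∀ x, 0 ≤ f x) (g : U →₀ ℤ) :
    HybridSubset g f ↔ (∀ x, 0 ≤ g x) ∧ (∀ x, g x ≤ f x) := by
  constructor
  · rintro ⟨m, x, h, h0, hstep, hlast⟩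
    have P : ∀ j : Fin (m + 1), ∀ y, 0 ≤ h j y ∧ h j y ≤ f y := by
      intro j
      induction j using Fin.induction with
      | zero => intro y; rw [h0]; exact ⟨hf y, le_refl _⟩
      | succ i ihP =>
        intro y
        obtain ⟨hne, heq⟩ := hstep i
        have h1 := (ihP y).1
        have h2 := (ihP y).2
        rw [heq]
        simp only [Finsupp.sub_apply]
        by_cases hy : x i = y
        · subst hy
          rw [Finsupp.single_eq_same]
          omega
        · rw [Finsupp.single_eq_of_ne' hy, sub_zero]
          exact ⟨h1, h2⟩
    rcases hlast with hlast | hlast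
    · rw [← hlast]
      exact ⟨fun y => (P (Fin.last m) y).1, fun y => (P (Fin.last m) y).2⟩
    · have Q : ∀ j : Fin (m + 1),
          h j = f - ∑ i ∈ Finset.univ.filter (fun i : Fin m => (i : ℕ) < (j : ℕ)),
            Finsupp.single (x i) (1 : ℤ) := by
        intro j
        induction j using Fin.induction with
        | zero =>
          have : Finset.univ.filter (fun i : Fin m => (i : ℕ) < ((0 : Fin (m+1)) : ℕ)) = ∅ := by
            ext k; simp
          rw [this, h0]
          simp
        | succ i ihQ =>
          have hfilter : Finset.univ.filter (fun k : Fin m => (k : ℕ) < ((i.succ : Fin (m+1)) : ℕ))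
              = insert i (Finset.univ.filter (fun k : Fin m => (k : ℕ) < ((i.castSucc : Fin (m+1)) : ℕ))) := by
            ext k
            simp only [Finset.mem_filter, Finset.mem_univ, true_and, Finset.mem_insert,
              Fin.val_succ, Fin.coe_castSucc]
            constructor
            · intro hk
              rcases Nat.lt_succ_iff_lt_or_eq.mp hk with hk | hk
              · exact Or.inr hk
              · exact Or.inl (Fin.ext hk)
            · rintro (rfl | hk)
              · omega
              · omega
          have hnotmem : i ∉ Finset.univ.filter (fun k : Fin m => (k : ℕ) < ((i.castSucc : Fin (m+1)) : ℕ)) := by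
            simp
          rw [(hstep i).2, ihQ, hfilter, Finset.sum_insert hnotmem]
          abel
      have hlastfilter : Finset.univ.filter (fun i : Fin m => (i : ℕ) < ((Fin.last m : Fin (m+1)) : ℕ))
          = Finset.univ := by
        ext k; simp [k.isLt]
      have hglast : g = f - h (Fin.last m) := by
        rw [Q (Fin.last m), hlastfilter, hlast]
        abel
      constructor
      · intro y
        rw [hglast]
        simp only [Finsupp.sub_apply]
        have := (P (Fin.last m) y).2
        omega
      · intro y
        rw [hglast]
        simp only [Finsupp.sub_apply]
        have := (P (Fin.last m) y).1
        omega
  · rintro ⟨hg, hgf⟩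
    have h0 : (0 : ℤ) ≤ hcard g := by
      apply Finset.sum_nonneg
      intro x _
      exact hg x
    exact (aux_back (hcard g).toNat g f hg hgf (by rw [Int.toNat_of_nonneg h0])).toHybridSubset
end

section
/- Let f be a new set on a universe U (a hybrid set all of whose multiplicities lie in {0,1}, or all of whose multiplicities lie in {0,−1}) with #f = n, and let k be any integer. Then the collection of hybrid sets g with #g = k and g ⊑ f is finite, and its cardinality equals |B(n,k)|, the absolute value of the generalized binomial coefficient. -/
set_option linter.unusedSectionVars false
set_option linter.unusedVariables false

namespace HybridAux

variable {U : Type*} [DecidableEq U]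

/-- One removal step in the subset order. -/
def HStep {U : Type*} (h h' : U →₀ ℤ) : Prop := ∃ x, h x ≠ 0 ∧ h' = h - Finsupp.single x 1

lemma hcard_add (a b : U →₀ ℤ) : hcard (a + b) = hcard a + hcard b :=
  Finsupp.sum_add_index' (fun _ => rfl) (fun _ _ _ => rfl)

lemma hcard_single (x : U) (c : ℤ) : hcard (Finsupp.single x c) = c :=
  Finsupp.sum_single_index rfl

lemma hcard_sub (a b : U →₀ ℤ) : hcard (a - b) = hcard a - hcard b := by
  have := hcard_add (a - b) b
  simp only [sub_add_cancel] at this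
  omega

lemma hcard_eq_sum {f : U →₀ ℤ} {s : Finset U} (hs : f.support ⊆ s) :
    hcard f = ∑ x ∈ s, f x :=
  Finsupp.sum_of_support_subset f hs (fun _ v => v) (fun _ _ => rfl)

lemma chain_eq {m : ℕ} (x : Fin m → U) (h : Fin (m + 1) → (U →₀ ℤ))
    (hc : ∀ j : Fin m, h j.succ = h j.castSucc - Finsupp.single (x j) 1) :
    h (Fin.last m) = h 0 - ∑ j : Fin m, Finsupp.single (x j) (1 : ℤ) := by
  classical
  have key : ∀ i : ℕ, ∀ hi : i ≤ m, h ⟨i, Nat.lt_succ_of_le hi⟩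
      = h 0 - ∑ j : Fin m, if (j : ℕ) < i then Finsupp.single (x j) (1 : ℤ) else 0 := by
    intro i
    induction i with
    | zero =>
      intro _
      simp only [Nat.not_lt_zero, if_false, Finset.sum_const_zero, sub_zero]
      rfl
    | succ i ih =>
      intro hi
      have hi' : i < m := hi
      have hstep := hc ⟨i, hi'⟩
      have e1 : (⟨i, hi'⟩ : Fin m).succ = ⟨i + 1, Nat.lt_succ_of_le hi⟩ := rfl
      have e2 : (⟨i, hi'⟩ : Fin m).castSucc = ⟨i, Nat.lt_succ_of_le (le_of_lt hi')⟩ := rfl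
      rw [e1, e2] at hstep
      rw [hstep, ih (le_of_lt hi'), sub_sub]
      congr 1
      have hterm : ∀ j : Fin m,
          (if (j : ℕ) < i + 1 then Finsupp.single (x j) (1 : ℤ) else 0)
          = (if (j : ℕ) < i then Finsupp.single (x j) (1 : ℤ) else 0)
            + (if j = ⟨i, hi'⟩ then Finsupp.single (x j) (1 : ℤ) else 0) := by
        intro j
        rcases lt_trichotomy (j : ℕ) i with hj | hj | hj
        · rw [if_pos (by omega), if_pos hj,
            if_neg (by intro e; rw [e] at hj; simp at hj), add_zero]
        · rw [if_pos (by omega), if_neg (by omega), if_pos (Fin.ext hj), zero_add]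
        · rw [if_neg (by omega), if_neg (by omega),
            if_neg (by intro e; rw [e] at hj; simp at hj), add_zero]
      rw [Finset.sum_congr rfl (fun j _ => hterm j), Finset.sum_add_distrib]
      simp
  have := key m le_rfl
  have e : (Fin.last m) = ⟨m, Nat.lt_succ_of_le le_rfl⟩ := rfl
  rw [e, this]
  congr 1
  exact Finset.sum_congr rfl (fun j _ => by rw [if_pos j.isLt])

lemma reach_pos {f : U →₀ ℤ} (hp : ∀ x, f x = 0 ∨ f x = 1) {h : U →₀ ℤ}
    (hr : Relation.ReflTransGen HStep f h) :
    (∀ x, h x = 0 ∨ h x = 1) ∧ h.support ⊆ f.support := by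
  induction hr with
  | refl => exact ⟨hp, subset_rfl⟩
  | @tail b c hab hbc ih =>
    obtain ⟨hv, hsupp⟩ := ih
    obtain ⟨x₀, hx0, rfl⟩ := hbc
    constructor
    · intro y
      by_cases hy : y = x₀
      · subst hy
        have : b y = 1 := by rcases hv y with h1 | h1 <;> omega
        left
        simp [this]
      · rcases hv y with h1 | h1 <;> [left; right] <;>
          simp [Finsupp.sub_apply, Finsupp.single_apply, Ne.symm hy, h1]
    · intro y hy
      rw [Finsupp.mem_support_iff] at hy
      apply hsupp
      rw [Finsupp.mem_support_iff]
      intro hby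
      by_cases hyx : y = x₀
      · subst hyx; exact hx0 hby
      · apply hy
        simp [Finsupp.sub_apply, Finsupp.single_apply, Ne.symm hyx, hby]

lemma reach_pos_of (f : U →₀ ℤ) (hp : ∀ x, f x = 0 ∨ f x = 1) : ∀ (N : ℕ) (h : U →₀ ℤ),
    (f.support \ h.support).card = N →
    (∀ x, h x = 0 ∨ h x = 1) → h.support ⊆ f.support →
    Relation.ReflTransGen HStep f h := by
  classical
  intro N
  induction N with
  | zero =>
    intro h hN hv hsupp
    have hsub : f.support ⊆ h.support := by
      intro y hy
      by_contra hyn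
      have : y ∈ f.support \ h.support := Finset.mem_sdiff.2 ⟨hy, hyn⟩
      rw [Finset.card_eq_zero] at hN
      simp [hN] at this
    have : f = h := by
      ext y
      by_cases hy : y ∈ h.support
      · have hyf : y ∈ f.support := hsupp hy
        rw [Finsupp.mem_support_iff] at hy hyf
        have e1 : f y = 1 := by rcases hp y with h1 | h1 <;> omega
        have e2 : h y = 1 := by rcases hv y with h1 | h1 <;> omega
        rw [e1, e2]
      · have hyf : y ∉ f.support := fun hc => hy (hsub hc)
        rw [Finsupp.notMem_support_iff] at hy hyf
        rw [hy, hyf]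
    rw [this]
  | succ N ih =>
    intro h hN hv hsupp
    have hne : (f.support \ h.support).Nonempty := by
      rw [← Finset.card_pos, hN]; omega
    obtain ⟨x₀, hx0⟩ := hne
    rw [Finset.mem_sdiff, Finsupp.mem_support_iff, Finsupp.notMem_support_iff] at hx0
    obtain ⟨hfx, hhx⟩ := hx0
    set h' := h + Finsupp.single x₀ 1 with hh'
    have happ : ∀ y, h' y = if y = x₀ then 1 else h y := by
      intro y
      by_cases hy : y = x₀ <;>
        simp [hh', Finsupp.add_apply, Finsupp.single_apply, hy, Ne.symm, hhx]
    have hv' : ∀ y, h' y = 0 ∨ h' y = 1 := by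
      intro y
      rw [happ]
      by_cases hy : y = x₀
      · simp [hy]
      · simp only [if_neg hy]; exact hv y
    have hsupp' : h'.support ⊆ f.support := by
      intro y hy
      rw [Finsupp.mem_support_iff, happ] at hy
      by_cases hyx : y = x₀
      · subst hyx; exact Finsupp.mem_support_iff.2 hfx
      · rw [if_neg hyx] at hy
        exact hsupp (Finsupp.mem_support_iff.2 hy)
    have hmeas : (f.support \ h'.support).card = N := by
      have : f.support \ h'.support = (f.support \ h.support).erase x₀ := by
        ext y
        rw [Finset.mem_erase, Finset.mem_sdiff, Finset.mem_sdiff,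
          Finsupp.notMem_support_iff, Finsupp.notMem_support_iff, happ]
        by_cases hyx : y = x₀
        · subst hyx
          simp
        · rw [if_neg hyx]
          tauto
      rw [this, Finset.card_erase_of_mem (Finset.mem_sdiff.2
        ⟨Finsupp.mem_support_iff.2 hfx, Finsupp.notMem_support_iff.2 hhx⟩), hN]
      omega
    refine (ih h' hmeas hv' hsupp').tail ⟨x₀, ?_, ?_⟩
    · rw [happ, if_pos rfl]; omega
    · rw [hh', add_sub_cancel_right]

lemma reach_neg {f : U →₀ ℤ} {h : U →₀ ℤ}
    (hr : Relation.ReflTransGen HStep f h) :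
    (∀ x, h x ≤ f x) ∧ h.support ⊆ f.support := by
  induction hr with
  | refl => exact ⟨fun _ => le_rfl, subset_rfl⟩
  | @tail b c hab hbc ih =>
    obtain ⟨hle, hsupp⟩ := ih
    obtain ⟨x₀, hx0, rfl⟩ := hbc
    have happ : ∀ y, (b - Finsupp.single x₀ 1 : U →₀ ℤ) y = if y = x₀ then b y - 1 else b y := by
      intro y
      by_cases hy : y = x₀ <;>
        simp [Finsupp.sub_apply, Finsupp.single_apply, hy, Ne.symm]
    constructor
    · intro y
      rw [happ]
      by_cases hy : y = x₀
      · rw [if_pos hy, hy]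
        have := hle x₀; omega
      · rw [if_neg hy]; exact hle y
    · intro y hy
      rw [Finsupp.mem_support_iff, happ] at hy
      by_cases hyx : y = x₀
      · subst hyx
        exact hsupp (Finsupp.mem_support_iff.2 hx0)
      · rw [if_neg hyx] at hy
        exact hsupp (Finsupp.mem_support_iff.2 hy)

lemma hcard_le_of {f h : U →₀ ℤ} (hle : ∀ x, h x ≤ f x) (hsupp : h.support ⊆ f.support) :
    hcard h ≤ hcard f := by
  rw [hcard_eq_sum hsupp, hcard_eq_sum (subset_rfl : f.support ⊆ f.support)]
  exact Finset.sum_le_sum fun i _ => hle i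

lemma reach_neg_of (f : U →₀ ℤ) (hm : ∀ x, f x = 0 ∨ f x = -1) : ∀ (N : ℕ) (h : U →₀ ℤ),
    (hcard f - hcard h).toNat = N →
    (∀ x, h x ≤ f x) → h.support ⊆ f.support →
    Relation.ReflTransGen HStep f h := by
  intro N
  induction N with
  | zero =>
    intro h hN hle hsupp
    have hle' : hcard h ≤ hcard f := hcard_le_of hle hsupp
    have hzero : hcard (f - h) = 0 := by
      have := hcard_add (f - h) h
      simp only [sub_add_cancel] at this
      omega
    have hfh : f - h = 0 := by
      have hsum : ∑ x ∈ (f - h).support, (f - h) x = 0 := by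
        rw [← hcard_eq_sum (subset_rfl : (f - h).support ⊆ (f - h).support)]
        exact hzero
      have hall := (Finset.sum_eq_zero_iff_of_nonneg
        (fun i _ => sub_nonneg.2 (hle i))).1 hsum
      ext y
      by_cases hy : y ∈ (f - h).support
      · exact ((Finsupp.mem_support_iff.1 hy) (hall y hy)).elim
      · simpa using Finsupp.notMem_support_iff.1 hy
    have : f = h := by
      have := sub_eq_zero.1 hfh
      exact this
    rw [this]
  | succ N ih =>
    intro h hN hle hsupp
    have hlt : hcard h < hcard f := by
      have := hcard_le_of hle hsupp
      omega
    have hx : ∃ x, h x < f x := by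
      by_contra hc
      push_neg at hc
      have : ∀ x, h x = f x := fun x => le_antisymm (hle x) (hc x)
      have he : h = f := Finsupp.ext this
      rw [he] at hlt
      exact lt_irrefl _ hlt
    obtain ⟨x₀, hx0⟩ := hx
    have hfx : f x₀ = -1 := by
      rcases hm x₀ with h1 | h1
      · exfalso
        have : h x₀ < 0 := by omega
        have : x₀ ∈ h.support := Finsupp.mem_support_iff.2 (by omega)
        have := Finsupp.mem_support_iff.1 (hsupp this)
        exact this h1
      · exact h1
    have hhx : h x₀ ≤ -2 := by omega
    set h' := h + Finsupp.single x₀ 1 with hh'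
    have happ : ∀ y, h' y = if y = x₀ then h y + 1 else h y := by
      intro y
      by_cases hy : y = x₀ <;>
        simp [hh', Finsupp.add_apply, Finsupp.single_apply, hy, Ne.symm]
    have hle' : ∀ x, h' x ≤ f x := by
      intro y
      rw [happ]
      by_cases hy : y = x₀
      · rw [if_pos hy, hy]; omega
      · rw [if_neg hy]; exact hle y
    have hsupp' : h'.support ⊆ f.support := by
      intro y hy
      rw [Finsupp.mem_support_iff, happ] at hy
      by_cases hyx : y = x₀
      · subst hyx; exact Finsupp.mem_support_iff.2 (by omega)
      · rw [if_neg hyx] at hy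
        exact hsupp (Finsupp.mem_support_iff.2 hy)
    have hcard' : hcard h' = hcard h + 1 := by
      rw [hh', hcard_add, hcard_single]
    refine (ih h' (by omega) hle' hsupp').tail ⟨x₀, ?_, ?_⟩
    · rw [happ, if_pos rfl]; omega
    · rw [hh', add_sub_cancel_right]

lemma reach_to_data {f h : U →₀ ℤ} (hr : Relation.ReflTransGen HStep f h) :
    ∃ (m : ℕ) (x : Fin m → U) (hs : Fin (m + 1) → (U →₀ ℤ)),
      hs 0 = f ∧
      (∀ j : Fin m, hs j.castSucc (x j) ≠ 0 ∧
        hs j.succ = hs j.castSucc - Finsupp.single (x j) 1) ∧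
      hs (Fin.last m) = h := by
  induction hr with
  | refl => exact ⟨0, Fin.elim0, fun _ => f, rfl, fun j => j.elim0, rfl⟩
  | @tail b c hab hbc ih =>
    obtain ⟨m, x, hs, h0, hc, hlast⟩ := ih
    obtain ⟨x₀, hx0, hc'⟩ := hbc
    refine ⟨m + 1, Fin.snoc x x₀, Fin.snoc hs c, ?_, ?_, ?_⟩
    · rw [show (0 : Fin (m + 2)) = Fin.castSucc 0 from rfl, Fin.snoc_castSucc]
      exact h0
    · intro j
      refine Fin.lastCases ?_ ?_ j
      · simp only [Fin.snoc_last, Fin.snoc_castSucc, Fin.succ_last, hlast]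
        exact ⟨hx0, hc'⟩
      · intro i
        have e : (Fin.castSucc i).castSucc = Fin.castSucc i.castSucc := rfl
        simp only [e, Fin.succ_castSucc, Fin.snoc_castSucc]
        exact hc i
    · rw [Fin.snoc_last]

lemma hybrid_iff (g f : U →₀ ℤ) : HybridSubset g f ↔
    ∃ h, Relation.ReflTransGen HStep f h ∧ (g = h ∨ g = f - h) := by
  constructor
  · rintro ⟨m, x, h, h0, hc, hg⟩
    refine ⟨h (Fin.last m), ?_, ?_⟩
    · have key : ∀ i : ℕ, ∀ hi : i ≤ m,
          Relation.ReflTransGen HStep f (h ⟨i, Nat.lt_succ_of_le hi⟩) := by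
        intro i
        induction i with
        | zero =>
          intro _
          rw [show (⟨0, Nat.lt_succ_of_le (Nat.zero_le m)⟩ : Fin (m + 1)) = 0 from rfl, h0]
        | succ i ih =>
          intro hi
          have hi' : i < m := hi
          refine (ih (le_of_lt hi')).tail ⟨x ⟨i, hi'⟩, (hc ⟨i, hi'⟩).1, ?_⟩
          exact (hc ⟨i, hi'⟩).2
      have := key m le_rfl
      rwa [show (⟨m, Nat.lt_succ_of_le le_rfl⟩ : Fin (m + 1)) = Fin.last m from rfl] at this
    · rcases hg with hg | hg
      · exact Or.inl hg.symm
      · refine Or.inr ?_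
        rw [hg, chain_eq x h (fun j => (hc j).2), h0]
        abel
  · rintro ⟨h, hr, hg⟩
    obtain ⟨m, x, hs, h0, hc, hlast⟩ := reach_to_data hr
    refine ⟨m, x, hs, h0, hc, ?_⟩
    rcases hg with rfl | hg
    · exact Or.inl hlast
    · refine Or.inr ?_
      have := chain_eq x hs (fun j => (hc j).2)
      rw [hlast, h0] at this
      rw [hg, this]
      abel

lemma hybrid_pos_iff {f : U →₀ ℤ} (hp : ∀ x, f x = 0 ∨ f x = 1) (g : U →₀ ℤ) :
    HybridSubset g f ↔ (∀ x, g x = 0 ∨ g x = 1) ∧ g.support ⊆ f.support := by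
  rw [hybrid_iff]
  constructor
  · rintro ⟨h, hr, hg⟩
    obtain ⟨hv, hsupp⟩ := reach_pos hp hr
    have hle : ∀ x, h x ≤ f x := by
      intro y
      rcases hv y with h1 | h1
      · rcases hp y with h2 | h2 <;> omega
      · have : y ∈ h.support := Finsupp.mem_support_iff.2 (by omega)
        have := Finsupp.mem_support_iff.1 (hsupp this)
        rcases hp y with h2 | h2 <;> omega
    rcases hg with rfl | rfl
    · exact ⟨hv, hsupp⟩
    · constructor
      · intro y
        rw [Finsupp.sub_apply]
        rcases hp y with h2 | h2
        · have : h y = 0 := by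
            rcases hv y with h1 | h1
            · exact h1
            · have := hle y; omega
          omega
        · rcases hv y with h1 | h1 <;> omega
      · intro y hy
        rw [Finsupp.mem_support_iff, Finsupp.sub_apply] at hy
        rw [Finsupp.mem_support_iff]
        intro hfy
        have : h y = 0 := Finsupp.notMem_support_iff.1
          (fun hc => (Finsupp.mem_support_iff.1 (hsupp hc)) hfy)
        omega
  · rintro ⟨hv, hsupp⟩
    exact ⟨g, reach_pos_of f hp _ g rfl hv hsupp, Or.inl rfl⟩

lemma hybrid_neg_iff {f : U →₀ ℤ} (hm : ∀ x, f x = 0 ∨ f x = -1) (g : U →₀ ℤ) :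
    HybridSubset g f ↔ g.support ⊆ f.support ∧ ((∀ x, g x ≤ f x) ∨ (∀ x, 0 ≤ g x)) := by
  rw [hybrid_iff]
  constructor
  · rintro ⟨h, hr, hg⟩
    obtain ⟨hle, hsupp⟩ := reach_neg hr
    rcases hg with rfl | rfl
    · exact ⟨hsupp, Or.inl hle⟩
    · constructor
      · intro y hy
        rw [Finsupp.mem_support_iff, Finsupp.sub_apply] at hy
        rw [Finsupp.mem_support_iff]
        intro hfy
        have : h y = 0 := Finsupp.notMem_support_iff.1
          (fun hc => (Finsupp.mem_support_iff.1 (hsupp hc)) hfy)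
        omega
      · refine Or.inr fun y => ?_
        rw [Finsupp.sub_apply]
        have := hle y; omega
  · rintro ⟨hsupp, hle | hpos⟩
    · exact ⟨g, reach_neg_of f hm _ g rfl hle hsupp, Or.inl rfl⟩
    · refine ⟨f - g, reach_neg_of f hm _ (f - g) rfl ?_ ?_, Or.inr (by abel)⟩
      · intro y
        rw [Finsupp.sub_apply]
        have := hpos y; omega
      · intro y hy
        rw [Finsupp.mem_support_iff, Finsupp.sub_apply] at hy
        rw [Finsupp.mem_support_iff]
        intro hfy
        have : g y = 0 := Finsupp.notMem_support_iff.1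
          (fun hc => (Finsupp.mem_support_iff.1 (hsupp hc)) hfy)
        omega

/-- indicator of a finset -/
noncomputable def ind (T : Finset U) : U →₀ ℤ := ∑ x ∈ T, Finsupp.single x (1 : ℤ)

lemma ind_apply (T : Finset U) (y : U) : ind T y = if y ∈ T then 1 else 0 := by
  rw [ind, Finset.sum_apply']
  simp [Finsupp.single_apply]

lemma ind_support (T : Finset U) : (ind T).support = T := by
  ext y
  rw [Finsupp.mem_support_iff, ind_apply]
  by_cases hy : y ∈ T <;> simp [hy]

lemma hcard_ind (T : Finset U) : hcard (ind T) = T.card := by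
  rw [hcard_eq_sum (le_of_eq (ind_support T))]
  rw [Finset.sum_congr rfl (fun y hy => by rw [ind_apply, if_pos hy])]
  simp

lemma count_pos (S : Finset U) (k : ℤ) :
    {g : U →₀ ℤ | hcard g = k ∧ (∀ x, g x = 0 ∨ g x = 1) ∧ g.support ⊆ S}.Finite ∧
    {g : U →₀ ℤ | hcard g = k ∧ (∀ x, g x = 0 ∨ g x = 1) ∧ g.support ⊆ S}.ncard
      = if 0 ≤ k then S.card.choose k.toNat else 0 := by
  by_cases hk : 0 ≤ k
  · have hset : {g : U →₀ ℤ | hcard g = k ∧ (∀ x, g x = 0 ∨ g x = 1) ∧ g.support ⊆ S}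
        = ↑((S.powersetCard k.toNat).image ind) := by
      ext g
      simp only [Set.mem_setOf_eq, Finset.coe_image, Set.mem_image, Finset.mem_coe,
        Finset.mem_powersetCard]
      constructor
      · rintro ⟨hcardg, hv, hsupp⟩
        refine ⟨g.support, ⟨hsupp, ?_⟩, ?_⟩
        · have : hcard g = (g.support.card : ℤ) := by
            rw [hcard_eq_sum (subset_rfl : g.support ⊆ g.support)]
            rw [Finset.sum_congr rfl (fun y hy => by
              rcases hv y with h1 | h1
              · exact absurd h1 (Finsupp.mem_support_iff.1 hy)
              · exact h1)]
            simp
          omega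
        · ext y
          rw [ind_apply]
          by_cases hy : y ∈ g.support
          · rw [if_pos hy]
            rcases hv y with h1 | h1
            · exact absurd h1 (Finsupp.mem_support_iff.1 hy)
            · exact h1.symm
          · rw [if_neg hy]
            exact (Finsupp.notMem_support_iff.1 hy).symm
      · rintro ⟨T, ⟨hTS, hTcard⟩, rfl⟩
        refine ⟨?_, fun y => ?_, ?_⟩
        · rw [hcard_ind, hTcard]; omega
        · rw [ind_apply]; by_cases hy : y ∈ T <;> simp [hy]
        · rw [ind_support]; exact hTS
    rw [hset]
    refine ⟨Finset.finite_toSet _, ?_⟩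
    rw [Set.ncard_coe_finset, Finset.card_image_of_injective _
      (fun T T' hTT' => by rw [← ind_support T, ← ind_support T', hTT']),
      Finset.card_powersetCard, if_pos hk]
  · have hset : {g : U →₀ ℤ | hcard g = k ∧ (∀ x, g x = 0 ∨ g x = 1) ∧ g.support ⊆ S}
        = ∅ := by
      ext g
      simp only [Set.mem_setOf_eq, Set.mem_empty_iff_false, iff_false]
      rintro ⟨hcardg, hv, -⟩
      have : 0 ≤ hcard g := by
        rw [hcard_eq_sum (subset_rfl : g.support ⊆ g.support)]
        exact Finset.sum_nonneg fun i _ => by rcases hv i with h1 | h1 <;> omega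
      omega
    rw [hset]
    exact ⟨Set.finite_empty, by rw [Set.ncard_empty, if_neg hk]⟩

/-- From a `Sym` over (the coercion of) a finset, a nonnegative hybrid set. -/
noncomputable def symToFinsupp {S : Finset U} {m : ℕ} (z : Sym (↥S) m) : U →₀ ℤ :=
  Finsupp.mapRange (fun n : ℕ => (n : ℤ)) rfl
    (Multiset.toFinsupp ((z : Multiset ↥S).map Subtype.val))

lemma symToFinsupp_apply {S : Finset U} {m : ℕ} (z : Sym (↥S) m) (y : U) :
    symToFinsupp z y = ((z : Multiset ↥S).map Subtype.val).count y := by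
  rw [symToFinsupp, Finsupp.mapRange_apply, Multiset.toFinsupp_apply]

lemma hcard_of_nonneg_eq {g : U →₀ ℤ} (hpos : ∀ x, 0 ≤ g x) :
    hcard g = ((g.mapRange Int.toNat Int.toNat_zero).sum fun _ v => v : ℕ) := by
  rw [hcard_eq_sum (subset_rfl : g.support ⊆ g.support)]
  have hsub : (g.mapRange Int.toNat Int.toNat_zero).support ⊆ g.support :=
    Finsupp.support_mapRange
  rw [Finsupp.sum_of_support_subset _ hsub _ (fun _ _ => rfl)]
  push_cast
  refine Finset.sum_congr rfl fun y _ => ?_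
  rw [Finsupp.mapRange_apply, Int.toNat_of_nonneg (hpos y)]

lemma count_neg (S : Finset U) (m : ℕ) :
    {g : U →₀ ℤ | hcard g = (m : ℤ) ∧ (∀ x, 0 ≤ g x) ∧ g.support ⊆ S}.Finite ∧
    {g : U →₀ ℤ | hcard g = (m : ℤ) ∧ (∀ x, 0 ≤ g x) ∧ g.support ⊆ S}.ncard
      = (S.card + m - 1).choose m := by
  set P := {g : U →₀ ℤ | hcard g = (m : ℤ) ∧ (∀ x, 0 ≤ g x) ∧ g.support ⊆ S} with hP
  have hmem : ∀ z : Sym (↥S) m, symToFinsupp z ∈ P := by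
    intro z
    refine ⟨?_, fun y => ?_, ?_⟩
    · rw [symToFinsupp, hcard_of_nonneg_eq (fun y => by
        rw [Finsupp.mapRange_apply]; positivity)]
      norm_cast
      have : ∀ (μ : U →₀ ℕ), (Finsupp.mapRange (fun n : ℕ => (n : ℤ)) rfl μ).mapRange
          Int.toNat Int.toNat_zero = μ := by
        intro μ; ext y; simp
      rw [this]
      have := Multiset.toFinsupp_sum_eq ((z : Multiset ↥S).map Subtype.val)
      rw [show ((Multiset.toFinsupp ((z : Multiset ↥S).map Subtype.val)).sum fun _ v => v)
        = ((Multiset.toFinsupp ((z : Multiset ↥S).map Subtype.val)).sum fun _ => id) from rfl,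
        this, Multiset.card_map]
      exact z.2
    · rw [symToFinsupp_apply]; positivity
    · intro y hy
      rw [Finsupp.mem_support_iff, symToFinsupp_apply] at hy
      have : y ∈ (z : Multiset ↥S).map Subtype.val := by
        by_contra hc
        exact hy (Multiset.count_eq_zero_of_notMem hc ▸ by norm_num)
      obtain ⟨b, _, rfl⟩ := Multiset.mem_map.1 this
      exact b.2
  have hbij : Function.Bijective (fun z : Sym (↥S) m => (⟨symToFinsupp z, hmem z⟩ : P)) := by
    constructor
    · intro z z' hzz'
      have : ∀ y, ((z : Multiset ↥S).map Subtype.val).count y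
          = ((z' : Multiset ↥S).map Subtype.val).count y := by
        intro y
        have := congrArg (fun w : P => (w : U →₀ ℤ) y) hzz'
        simpa only [symToFinsupp_apply, Nat.cast_inj] using this
      have hM : (z : Multiset ↥S).map Subtype.val = (z' : Multiset ↥S).map Subtype.val :=
        Multiset.ext.2 this
      have := Multiset.map_injective Subtype.val_injective hM
      exact Subtype.ext this
    · rintro ⟨g, hg, hpos, hsupp⟩
      set μ := g.mapRange Int.toNat Int.toNat_zero with hμ
      have hμsupp : ∀ a, a ∈ μ.support → a ∈ S := by
        intro a ha
        rw [Finsupp.mem_support_iff, hμ, Finsupp.mapRange_apply] at ha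
        refine hsupp (Finsupp.mem_support_iff.2 fun hc => ha ?_)
        rw [hc]; rfl
      set M := Finsupp.toMultiset μ with hM
      have hmemM : ∀ a, a ∈ M → a ∈ S := by
        intro a ha
        rw [hM, Finsupp.mem_toMultiset] at ha
        exact hμsupp a ha
      set M' : Multiset ↥S := M.attach.map (fun a => ⟨a.1, hmemM a.1 a.2⟩) with hM'
      have hcardM : Multiset.card M' = m := by
      
        rw [hM', Multiset.card_map, Multiset.card_attach, hM, Finsupp.card_toMultiset]
        have := hcard_of_nonneg_eq hpos
        rw [hg] at this
        exact_mod_cast this.symm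
      refine ⟨⟨M', hcardM⟩, ?_⟩
      have hMap : (M'.map Subtype.val) = M := by
        rw [hM', Multiset.map_map]
        exact Multiset.attach_map_val M
      apply Subtype.ext
      show symToFinsupp _ = g
      unfold symToFinsupp
      show Finsupp.mapRange _ rfl (Multiset.toFinsupp (M'.map Subtype.val)) = g
      rw [hMap, hM, Finsupp.toMultiset_toFinsupp]
      ext y
      rw [Finsupp.mapRange_apply, hμ, Finsupp.mapRange_apply]
      exact_mod_cast Int.toNat_of_nonneg (hpos y)
  constructor
  · rw [← Set.finite_coe_iff]
    exact Finite.of_equiv _ (Equiv.ofBijective _ hbij)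
  · rw [← Nat.card_coe_set_eq, ← Nat.card_congr (Equiv.ofBijective _ hbij),
      Nat.card_eq_fintype_card, Sym.card_sym_eq_choose, Fintype.card_coe]

lemma hcard_pos_eq {f : U →₀ ℤ} (hp : ∀ x, f x = 0 ∨ f x = 1) :
    hcard f = f.support.card := by
  rw [hcard_eq_sum (subset_rfl : f.support ⊆ f.support),
    Finset.sum_congr rfl (fun y hy => by
      rcases hp y with h1 | h1
      · exact absurd h1 (Finsupp.mem_support_iff.1 hy)
      · exact h1)]
  simp

lemma hcard_neg_eq {f : U →₀ ℤ} (hm : ∀ x, f x = 0 ∨ f x = -1) :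
    hcard f = -f.support.card := by
  rw [hcard_eq_sum (subset_rfl : f.support ⊆ f.support),
    Finset.sum_congr rfl (fun y hy => by
      rcases hm y with h1 | h1
      · exact absurd h1 (Finsupp.mem_support_iff.1 hy)
      · exact h1)]
  simp

lemma bgen_natAbs_pos {n k : ℤ} (hn : 0 ≤ n) :
    (Bgen n k).natAbs = if 0 ≤ k then n.toNat.choose k.toNat else 0 := by
  by_cases hk : 0 ≤ k
  · rw [if_pos hk, Bgen]
    by_cases hkn : k ≤ n
    · rw [if_pos ⟨hk, hkn⟩, Int.natAbs_natCast]
    · rw [if_neg (by tauto), if_neg (by omega), if_neg (by omega), Int.natAbs_zero,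
        Nat.choose_eq_zero_of_lt (by omega)]
  · rw [if_neg hk, Bgen, if_neg (by tauto), if_neg (by tauto), if_neg (by omega),
      Int.natAbs_zero]

lemma bgen_natAbs_neg {n k : ℤ} (hn : n < 0) :
    (Bgen n k).natAbs = if 0 ≤ k then (-n + k - 1).toNat.choose k.toNat
      else if k ≤ n then (-k - 1).toNat.choose (n - k).toNat else 0 := by
  by_cases hk : 0 ≤ k
  · rw [if_pos hk, Bgen, if_neg (by omega), if_pos ⟨hk, hn⟩, Int.natAbs_mul, Int.natAbs_pow]
    simp
  · rw [if_neg hk]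
    by_cases hkn : k ≤ n
    · rw [if_pos hkn, Bgen, if_neg (by omega), if_neg (by omega), if_pos ⟨hkn, hn⟩,
        Int.natAbs_mul, Int.natAbs_pow]
      simp
    · rw [if_neg hkn, Bgen, if_neg (by omega), if_neg (by omega), if_neg (by omega),
        Int.natAbs_zero]

lemma main_pos (f : U →₀ ℤ) (hp : ∀ x, f x = 0 ∨ f x = 1) (k : ℤ) :
    {g : U →₀ ℤ | hcard g = k ∧ HybridSubset g f}.Finite ∧
    {g : U →₀ ℤ | hcard g = k ∧ HybridSubset g f}.ncard = (Bgen (hcard f) k).natAbs := by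
  have hset : {g : U →₀ ℤ | hcard g = k ∧ HybridSubset g f}
      = {g : U →₀ ℤ | hcard g = k ∧ (∀ x, g x = 0 ∨ g x = 1) ∧ g.support ⊆ f.support} := by
    ext g
    simp only [Set.mem_setOf_eq, hybrid_pos_iff hp]
  obtain ⟨hfin, hcount⟩ := count_pos (U := U) f.support k
  rw [hset]
  refine ⟨hfin, ?_⟩
  rw [hcount, hcard_pos_eq hp, bgen_natAbs_pos (by positivity)]
  simp

lemma hcard_nonneg {g : U →₀ ℤ} (hpos : ∀ x, 0 ≤ g x) : 0 ≤ hcard g := by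
  rw [hcard_eq_sum (subset_rfl : g.support ⊆ g.support)]
  exact Finset.sum_nonneg fun i _ => hpos i

lemma main_neg (f : U →₀ ℤ) (hm : ∀ x, f x = 0 ∨ f x = -1) (hlt : hcard f < 0) (k : ℤ) :
    {g : U →₀ ℤ | hcard g = k ∧ HybridSubset g f}.Finite ∧
    {g : U →₀ ℤ | hcard g = k ∧ HybridSubset g f}.ncard = (Bgen (hcard f) k).natAbs := by
  set n := hcard f with hn
  set S := f.support with hS
  have hcardS : (S.card : ℤ) = -n := by
    rw [hn, hcard_neg_eq hm]; ring
  by_cases hk : 0 ≤ k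
  · -- the only subsets are the removed parts: nonnegative multisets on S
    have hset : {g : U →₀ ℤ | hcard g = k ∧ HybridSubset g f}
        = {g : U →₀ ℤ | hcard g = ((k.toNat : ℕ) : ℤ) ∧ (∀ x, 0 ≤ g x) ∧ g.support ⊆ S} := by
      ext g
      simp only [Set.mem_setOf_eq, hybrid_neg_iff hm]
      constructor
      · rintro ⟨hck, hsupp, hle | hpos⟩
        · exfalso
          have := hcard_le_of hle hsupp
          omega
        · exact ⟨by omega, hpos, hsupp⟩
      · rintro ⟨hck, hpos, hsupp⟩
        exact ⟨by omega, hsupp, Or.inr hpos⟩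
    obtain ⟨hfin, hcount⟩ := count_neg (U := U) S k.toNat
    rw [hset]
    refine ⟨hfin, ?_⟩
    rw [hcount, bgen_natAbs_neg hlt, if_pos hk]
    congr 1
    omega
  · by_cases hkn : k ≤ n
    · -- complements: g = f - μ for nonnegative μ
      have hset : {g : U →₀ ℤ | hcard g = k ∧ HybridSubset g f}
          = (fun μ => f - μ) ''
            {μ : U →₀ ℤ | hcard μ = (((n - k).toNat : ℕ) : ℤ) ∧ (∀ x, 0 ≤ μ x)
              ∧ μ.support ⊆ S} := by
        ext g
        simp only [Set.mem_setOf_eq, hybrid_neg_iff hm, Set.mem_image]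
        constructor
        · rintro ⟨hck, hsupp, hle | hpos⟩
          · refine ⟨f - g, ⟨?_, fun y => ?_, ?_⟩, by abel⟩
            · rw [hcard_sub, ← hn, hck]; omega
            · rw [Finsupp.sub_apply]
              have := hle y; omega
            · intro y hy
              rw [Finsupp.mem_support_iff, Finsupp.sub_apply] at hy
              rw [hS, Finsupp.mem_support_iff]
              intro hfy
              have hgy : g y = 0 := Finsupp.notMem_support_iff.1
                (fun hc => (Finsupp.mem_support_iff.1 (hsupp hc)) hfy)
              omega
          · exfalso
            have := hcard_nonneg hpos
            omega
        · rintro ⟨μ, ⟨hcμ, hpos, hsupp⟩, rfl⟩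
          refine ⟨?_, ?_, Or.inl fun y => ?_⟩
          · rw [hcard_sub, ← hn, hcμ]; omega
          · intro y hy
            rw [Finsupp.mem_support_iff, Finsupp.sub_apply] at hy
            rw [Finsupp.mem_support_iff]
            intro hfy
            have hμy : μ y = 0 := Finsupp.notMem_support_iff.1
              (fun hc => (Finsupp.mem_support_iff.1 (hsupp hc)) hfy)
            omega
          · rw [Finsupp.sub_apply]
            have := hpos y; omega
      obtain ⟨hfin, hcount⟩ := count_neg (U := U) S (n - k).toNat
      rw [hset]
      refine ⟨hfin.image _, ?_⟩
      rw [Set.ncard_image_of_injective _ sub_right_injective, hcount,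
        bgen_natAbs_neg hlt, if_neg hk, if_pos hkn]
      congr 1
      omega
    · -- no subsets at all
      have hset : {g : U →₀ ℤ | hcard g = k ∧ HybridSubset g f} = ∅ := by
        ext g
        simp only [Set.mem_setOf_eq, Set.mem_empty_iff_false, iff_false]
        rintro ⟨hck, hsub⟩
        rw [hybrid_neg_iff hm] at hsub
        obtain ⟨hsupp, hle | hpos⟩ := hsub
        · have := hcard_le_of hle hsupp
          omega
        · have := hcard_nonneg hpos
          omega
      rw [hset, bgen_natAbs_neg hlt, if_neg hk, if_neg hkn]
      exact ⟨Set.finite_empty, Set.ncard_empty _⟩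

end HybridAux

/-- If `f` is a new set (all multiplicities in `{0,1}` or all in `{0,-1}`) with `#f = n`,
then for any integer `k` the collection of `k`-element hybrid subsets of `f` is finite of
cardinality `|B(n,k)|`. -/
theorem stmt15 {U : Type*} (f : U →₀ ℤ)
    (hf : (∀ x, f x = 0 ∨ f x = 1) ∨ (∀ x, f x = 0 ∨ f x = -1))
    (n k : ℤ) (hn : hcard f = n) :
    {g : U →₀ ℤ | hcard g = k ∧ HybridSubset g f}.Finite ∧
    {g : U →₀ ℤ | hcard g = k ∧ HybridSubset g f}.ncard = (Bgen n k).natAbs := by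
  classical
  subst hn
  rcases hf with hp | hm
  · exact HybridAux.main_pos f hp k
  · by_cases h0 : hcard f < 0
    · exact HybridAux.main_neg f hm h0 k
    · have hle : hcard f ≤ 0 := by
        rw [HybridAux.hcard_neg_eq hm]
        have : (0 : ℤ) ≤ (f.support.card : ℤ) := Int.natCast_nonneg _
        omega
      have hc0 : f.support.card = 0 := by
        have := HybridAux.hcard_neg_eq hm
        omega
      have hf0 : f = 0 := by
        rw [Finset.card_eq_zero] at hc0
        exact Finsupp.support_eq_empty.1 hc0
      refine HybridAux.main_pos f (fun x => Or.inl ?_) k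
      rw [hf0]; rfl
end

section
/- For integers n ≥ 1 and k ≥ 0, define the extended Stirling number of the first kind σ(n,k) := ((−1)^{k+1}/n!) · ∑_{m=1}^{n} C(n,m) · (−1)^m · m^{−k} ∈ ℚ (these are the values s(−n,k) of the Stirling numbers of the first kind extended to negative first argument). Then for all integers n ≥ 2 and k ≥ 1, σ(n−1, k) = σ(n, k−1) + n · σ(n, k); equivalently, the extended Stirling numbers satisfy the recursion s(N+1, k) = s(N, k−1) − N·s(N, k) for negative integers N. -/
/-!
Write `σ(n,k) = (-1)^(k+1) A(n,k) / n!` with `A(n,k) = ∑_{m=1}^n C(n,m) (-1)^m m^(-k)`.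
After clearing `n!` the recursion becomes `n A(n-1,k) = n A(n,k) - A(n,k-1)`, which holds
term by term because `n C(n-1,m) = C(n,m) (n-m)`; extending the sum for `n - 1` to `m = n`
is harmless since `C(n-1,n) = 0`.
-/

/-- The extended Stirling numbers of the first kind with negative first argument:
`σ(n,k) = s(-n,k) = ((-1)^{k+1}/n!) ∑_{m=1}^n C(n,m) (-1)^m m^{-k}`. -/
def sigmaS (n k : ℕ) : ℚ :=
  ((-1) ^ (k + 1) / (n.factorial : ℚ)) *
    ∑ m ∈ Finset.Icc 1 n, (n.choose m : ℚ) * (-1) ^ m * ((m : ℚ) ^ k)⁻¹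

open Finset

def altInvPowSum (n k : ℕ) : ℚ :=
  ∑ m ∈ Icc 1 n, (n.choose m : ℚ) * (-1) ^ m * ((m : ℚ) ^ k)⁻¹

lemma sigmaS_eq_altInvPowSum (n k : ℕ) :
    sigmaS n k = (-1) ^ (k + 1) / n.factorial * altInvPowSum n k :=
  rfl

lemma cast_succ_mul_choose (N m : ℕ) (hm : m ≤ N + 1) :
    (N + 1 : ℚ) * N.choose m = (N + 1).choose m * (N + 1 - m) := by
  have h := congrArg (Nat.cast (R := ℚ)) (Nat.choose_mul_succ_eq N m)
  push_cast [Nat.cast_sub hm] at h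
  linarith

lemma altInvPowSum_eq_sum_Icc_succ (N k : ℕ) :
    altInvPowSum N k =
      ∑ m ∈ Icc 1 (N + 1), (N.choose m : ℚ) * (-1) ^ m * ((m : ℚ) ^ k)⁻¹ := by
  rw [sum_Icc_succ_top (by omega), Nat.choose_succ_self, Nat.cast_zero, zero_mul, zero_mul,
    add_zero, altInvPowSum]

lemma succ_mul_altInvPowSum (N K : ℕ) :
    (N + 1 : ℚ) * altInvPowSum N (K + 1) =
      (N + 1) * altInvPowSum (N + 1) (K + 1) - altInvPowSum (N + 1) K := by
  rw [altInvPowSum_eq_sum_Icc_succ, altInvPowSum, altInvPowSum, mul_sum, mul_sum,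
    ← sum_sub_distrib]
  refine sum_congr rfl fun m hm => ?_
  obtain ⟨hm_pos, hm_le⟩ := mem_Icc.mp hm
  have hm0 : (m : ℚ) ≠ 0 := by exact_mod_cast (by omega : m ≠ 0)
  rw [pow_succ, mul_inv]
  field_simp
  exact cast_succ_mul_choose N m hm_le

/-- The recursion `s(N+1,k) = s(N,k-1) - N·s(N,k)` for negative `N`: in terms of
`σ(n,k) = s(-n,k)`, this reads `σ(n-1,k) = σ(n,k-1) + n·σ(n,k)` for `n ≥ 2`, `k ≥ 1`. -/
theorem stmt17 (n k : ℕ) (hn : 2 ≤ n) (hk : 1 ≤ k) :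
    sigmaS (n - 1) k = sigmaS n (k - 1) + (n : ℚ) * sigmaS n k := by
  obtain ⟨N, rfl⟩ : ∃ N, n = N + 1 := ⟨n - 1, by omega⟩
  obtain ⟨K, rfl⟩ : ∃ K, k = K + 1 := ⟨k - 1, by omega⟩
  have key := succ_mul_altInvPowSum N K
  simp only [sigmaS_eq_altInvPowSum, Nat.add_sub_cancel, Nat.factorial_succ]
  push_cast
  field_simp
  linear_combination (-1 : ℚ) ^ K * key
end

section
/- Define extended Stirling numbers for all integers n and k as follows: s(n,k) := (−1)^{n−k} · e_{n−k}(1, 2, …, n−1) if n ≥ 0, and s(n,k) := h_{n−k}(−1, −2, …, n) if n < 0; S(n,k) := h_{n−k}(1, 2, …, k) if k ≥ 0, and S(n,k) := (−1)^{n−k} · e_{n−k}(−1, −2, …, k+1) if k < 0 (so both vanish whenever the degree n−k is negative or, in the elementary case, exceeds the number of variables). Then for all integers n and k, S(n, k) = (−1)^{n+k} · s(−k, −n). -/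
/-- Extended Stirling numbers of the first kind for all integers `n, k`:
`s(n,k) = (-1)^{n-k} e_{n-k}(1, 2, …, n-1)` for `n ≥ 0` and `s(n,k) = h_{n-k}(-1, -2, …, n)`
for `n < 0`, vanishing when the degree `n - k` is negative. -/
noncomputable def sExt (n k : ℤ) : ℤ :=
  if n - k < 0 then 0
  else if 0 ≤ n then
    (-1) ^ (n - k).toNat *
      esymmM ((Multiset.range (n - 1).toNat).map fun j => ((j : ℤ) + 1)) (n - k).toNat
  else
    hsymmM ((Multiset.range (-n).toNat).map fun j => -((j : ℤ) + 1)) (n - k).toNat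

/-- Extended Stirling numbers of the second kind for all integers `n, k`:
`S(n,k) = h_{n-k}(1, 2, …, k)` for `k ≥ 0` and `S(n,k) = (-1)^{n-k} e_{n-k}(-1, -2, …, k+1)`
for `k < 0`, vanishing when the degree `n - k` is negative. -/
noncomputable def SExt (n k : ℤ) : ℤ :=
  if n - k < 0 then 0
  else if 0 ≤ k then
    hsymmM ((Multiset.range k.toNat).map fun j => ((j : ℤ) + 1)) (n - k).toNat
  else
    (-1) ^ (n - k).toNat *
      esymmM ((Multiset.range (-k - 1).toNat).map fun j => -((j : ℤ) + 1)) (n - k).toNat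

theorem neg_one_pow_natAbs_add_eq_toNat_sub {R : Type*} [Ring R] (a b : ℤ) (h : 0 ≤ a - b) :
    (-1 : R) ^ (a + b).natAbs = (-1) ^ (a - b).toNat := by
  rw [neg_one_pow_eq_pow_mod_two, neg_one_pow_eq_pow_mod_two (n := (a - b).toNat)]
  congr 1
  omega

section SymmetricFunctions

variable {R : Type*} [CommRing R]

theorem esymmM_zero_left (d : ℕ) : esymmM (0 : Multiset R) d = if d = 0 then 1 else 0 := by
  cases d <;> simp [esymmM, Multiset.powersetCard_zero_right]

theorem hsymmM_zero_left (d : ℕ) : hsymmM (0 : Multiset R) d = if d = 0 then 1 else 0 := by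
  simp [hsymmM, PowerSeries.coeff_one]

theorem esymmM_map_neg (A : Multiset R) (d : ℕ) :
    esymmM (A.map Neg.neg) d = (-1) ^ d * esymmM A d := by
  rw [esymmM, esymmM, Multiset.powersetCard_map, Multiset.map_map, ← Multiset.sum_map_mul_left]
  refine congrArg Multiset.sum (Multiset.map_congr rfl fun s hs => ?_)
  rw [Function.comp_apply, Multiset.prod_map_neg, (Multiset.mem_powersetCard.mp hs).2]

theorem hsymmM_map_neg (B : Multiset R) (d : ℕ) :
    hsymmM (B.map Neg.neg) d = (-1) ^ d * hsymmM B d := by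
  have geom_neg (b : R) : (PowerSeries.mk fun k => (-b) ^ k) =
      PowerSeries.rescale (-1) (PowerSeries.mk fun k => b ^ k) := by
    ext m
    rw [PowerSeries.coeff_rescale, PowerSeries.coeff_mk, PowerSeries.coeff_mk, neg_pow]
  rw [hsymmM, hsymmM, ← PowerSeries.coeff_rescale, map_multiset_prod (PowerSeries.rescale _),
    Multiset.map_map, Multiset.map_map]
  simp only [Function.comp_def, geom_neg]

end SymmetricFunctions

theorem map_neg_range_succ (m : ℕ) :
    (Multiset.range m).map (fun j => -((j : ℤ) + 1)) =
      ((Multiset.range m).map fun j => (j : ℤ) + 1).map Neg.neg := by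
  rw [Multiset.map_map]
  rfl

/-- The duality `S(n,k) = (-1)^{n+k} s(-k,-n)` between the extended Stirling numbers
of the first and second kind. -/
theorem stmt19 (n k : ℤ) :
    SExt n k = (-1) ^ (n + k).natAbs * sExt (-k) (-n) := by
  rw [SExt, sExt, show -k - -n = n - k by ring]
  rcases lt_or_ge (n - k) 0 with hnk | hnk
  · simp [hnk]
  rw [if_neg hnk.not_gt, if_neg hnk.not_gt, neg_one_pow_natAbs_add_eq_toNat_sub n k hnk]
  rcases lt_trichotomy k 0 with hk | rfl | hk
  · rw [if_neg hk.not_ge, if_pos (by omega), map_neg_range_succ, esymmM_map_neg]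
  · simp [hsymmM_zero_left, esymmM_zero_left, ← mul_pow]
  · rw [if_pos hk.le, if_neg (by omega), neg_neg, map_neg_range_succ, hsymmM_map_neg,
      ← mul_assoc, ← mul_pow]
    simp
end
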